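/- arXiv:2212.12518 — 3 statements merged into one kernel-verified Lean document; each statement's English description precedes it below -/
import Mathlib

section
/- Let δ < 1. There exists a constant C = C(δ) > 0 such that for every continuously differentiable function w : [0,∞) → ℝ with sup_{s≥0} (1+s)^{2−δ}|w′(s)| < ∞, one has for all r > 0: |w(r) − (1/r)∫₀^r w(s) ds| ≤ C · (r·log^{χ(δ)}(e+r)/(1+r)^{2−δ⁺}) · sup_{s≥0} (1+s)^{2−δ}|w′(s)|. -/
open MeasureTheory intervalIntegral Set


noncomputable section

/-- δ⁺ = max(δ,0) -/
def deltaPlus (δ : ℝ) : ℝ := max δ 0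

/-- χ(δ) = 1 if δ = 0 and 0 otherwise -/
def chi (δ : ℝ) : ℝ := if δ = 0 then 1 else 0

/-- H(δ) = 1 if δ > 0 and 0 otherwise -/
def Hjump (δ : ℝ) : ℝ := if 0 < δ then 1 else 0

/-- w̄(u,r) = (1/r) ∫₀^r w(u,s) ds -/
def bar (w : ℝ → ℝ → ℝ) (u r : ℝ) : ℝ := (1 / r) * ∫ s in (0:ℝ)..r, w u s

/-- f(u,r) = exp((1/2) ∫₀^r (h(u,s) − h̄(u,s))²/s ds) -/
def mf (h : ℝ → ℝ → ℝ) (u r : ℝ) : ℝ :=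
  Real.exp ((1 / 2) * ∫ s in (0:ℝ)..r, (h u s - bar h u s) ^ 2 / s)

/-- f̃(u,r) = (1/r) ∫₀^r (1 − 3s²) f(u,s) ds -/
def mft (h : ℝ → ℝ → ℝ) (u r : ℝ) : ℝ :=
  (1 / r) * ∫ s in (0:ℝ)..r, (1 - 3 * s ^ 2) * mf h u s

/-- G = (1/2) ∂_r f̃ -/
def mG (h : ℝ → ℝ → ℝ) (u r : ℝ) : ℝ := (1 / 2) * deriv (mft h u) r

/-- J = G − r ∂_r G -/
def mJ (h : ℝ → ℝ → ℝ) (u r : ℝ) : ℝ := mG h u r - r * deriv (mG h u) r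

/-- (D h)(u,r) = ∂_u h − (f̃/2) ∂_r h -/
def Dop (h : ℝ → ℝ → ℝ) (u r : ℝ) : ℝ :=
  deriv (fun v => h v r) u - mft h u r / 2 * deriv (h u) r

/-- h is a global classical solution of D h = G (h − h̄) on [0,∞)×[0,∞) with data h₀ -/
def IsGlobalSolution (k : ℕ) (h₀ : ℝ → ℝ) (h : ℝ → ℝ → ℝ) : Prop :=
  ContDiffOn ℝ (k + 1) (Function.uncurry h) (Set.Ici (0:ℝ) ×ˢ Set.Ici (0:ℝ)) ∧
  (∀ u ≥ (0:ℝ), ∀ r ≥ (0:ℝ), Dop h u r = mG h u r * (h u r - bar h u r)) ∧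
  (∀ r ≥ (0:ℝ), h 0 r = h₀ r)

/-- regularity and boundedness hypotheses on the initial data h₀, for a decay parameter δ:
h₀ ∈ C^{k+1}([0,∞)) ∩ L^∞([0,∞)) with ‖h₀′′‖_{L^{∞,3−δ}} < ∞ -/
def InitialData (δ : ℝ) (k : ℕ) (h₀ : ℝ → ℝ) : Prop :=
  ContDiffOn ℝ (k + 1) h₀ (Set.Ici 0) ∧
  (∃ M, ∀ r ≥ (0:ℝ), |h₀ r| ≤ M) ∧
  (∃ M, ∀ r ≥ (0:ℝ), (1 + r) ^ (3 - δ) * |deriv (deriv h₀) r| ≤ M)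

/-- the averaging estimate |w(r) − w̄(r)| ≲ r log^{χ(δ)}(e+r)/(1+r)^{2−δ⁺} ‖w′‖_{L^{∞,2−δ}}. -/
theorem averaging_estimate (δ : ℝ) (hδ : δ < 1) :
    ∃ C > (0:ℝ), ∀ w : ℝ → ℝ, ContDiffOn ℝ 1 w (Set.Ici 0) →
      (∃ M, ∀ s ≥ (0:ℝ), (1 + s) ^ (2 - δ) * |deriv w s| ≤ M) →
      ∀ r > (0:ℝ),
        |w r - (1 / r) * ∫ s in (0:ℝ)..r, w s| ≤
          C * (r * Real.log (Real.exp 1 + r) ^ chi δ / (1 + r) ^ (2 - deltaPlus δ)) *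
            (⨆ s : Set.Ici (0:ℝ), (1 + s.1) ^ (2 - δ) * |deriv w s.1|) := by
  have h1δ : (0:ℝ) < 1 - δ := by linarith
  have hC2 : (0:ℝ) < (if δ = 0 then (4:ℝ) else 4 / (|δ| * (1 - δ))) := by
    split_ifs with h
    · norm_num
    · have : 0 < |δ| := abs_pos.mpr h
      positivity
  refine ⟨max 2 (if δ = 0 then (4:ℝ) else 4 / (|δ| * (1 - δ))),
    lt_of_lt_of_le two_pos (le_max_left _ _), ?_⟩
  set C : ℝ := max 2 (if δ = 0 then (4:ℝ) else 4 / (|δ| * (1 - δ))) with hCdef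
  have hCge2 : (2:ℝ) ≤ C := le_max_left _ _
  have hC0 : (0:ℝ) < C := lt_of_lt_of_le two_pos hCge2
  clear_value C
  intro w hw hMex r hr
  obtain ⟨M, hM⟩ := hMex
  set N : ℝ := ⨆ s : Set.Ici (0:ℝ), (1 + s.1) ^ (2 - δ) * |deriv w s.1| with hNdef
  have hbdd : BddAbove (Set.range fun s : Set.Ici (0:ℝ) => (1 + s.1) ^ (2 - δ) * |deriv w s.1|) := by
    refine ⟨M, ?_⟩; rintro _ ⟨s, rfl⟩; exact hM s.1 s.2
  have hN : ∀ s : ℝ, 0 ≤ s → (1 + s) ^ (2 - δ) * |deriv w s| ≤ N :=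
    fun s hs => le_ciSup hbdd ⟨s, hs⟩
  have hN0 : 0 ≤ N := le_trans (by positivity) (hN 0 le_rfl)
  clear_value N
  have hpos : ∀ t : ℝ, 0 ≤ t → (0:ℝ) < 1 + t := fun t ht => by linarith
  -- pointwise bound on deriv
  have hptw : ∀ t : ℝ, 0 ≤ t → |deriv w t| ≤ N * (1 + t) ^ (δ - 2) := by
    intro t ht
    have h1 : (0:ℝ) < 1 + t := hpos t ht
    have h2 : (0:ℝ) < (1 + t) ^ (2 - δ) := Real.rpow_pos_of_pos h1 _
    rw [show δ - 2 = -(2 - δ) by ring, Real.rpow_neg h1.le, ← div_eq_mul_inv,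
      le_div_iff₀ h2]
    calc |deriv w t| * (1 + t) ^ (2 - δ) = (1 + t) ^ (2 - δ) * |deriv w t| := mul_comm _ _
      _ ≤ N := hN t ht
  have hbN : ∀ t : ℝ, 0 ≤ t → |deriv w t| ≤ N := by
    intro t ht
    refine (hptw t ht).trans ?_
    have h1 : (1 + t) ^ (δ - 2) ≤ 1 :=
      Real.rpow_le_one_of_one_le_of_nonpos (by linarith) (by linarith)
    exact mul_le_of_le_one_right hN0 h1
  -- integrability of deriv w
  have hii : ∀ a b : ℝ, 0 ≤ a → a ≤ b → IntervalIntegrable (deriv w) volume a b := by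
    intro a b ha hab
    rw [intervalIntegrable_iff_integrableOn_Ioc_of_le hab]
    refine Integrable.mono' (g := fun _ => N) (integrableOn_const measure_Ioc_lt_top.ne)
      ((measurable_deriv w).aestronglyMeasurable.restrict) ?_
    filter_upwards [ae_restrict_mem measurableSet_Ioc] with t ht
    simpa using hbN t (ha.trans ht.1.le)
  -- continuity of power functions
  have hcpow : ∀ p : ℝ, ContinuousOn (fun t : ℝ => (1 + t) ^ p) (Set.Ici 0) := by
    intro p t ht
    exact (ContinuousAt.rpow_const (by fun_prop) (Or.inl (hpos t ht).ne')).continuousWithinAt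
  -- FTC for power integrals
  have hrpowInt : ∀ (p a b : ℝ), 0 ≤ a → a ≤ b → p ≠ 0 →
      ∫ t in a..b, (1 + t) ^ (p - 1) = ((1 + b) ^ p - (1 + a) ^ p) / p := by
    intro p a b ha hab hp
    have hsub : Set.uIcc a b ⊆ Set.Ici 0 := by
      rw [Set.uIcc_of_le hab]; exact fun x hx => ha.trans hx.1
    have hInt : IntervalIntegrable (fun t => (1 + t) ^ (p - 1)) volume a b :=
      ((hcpow (p - 1)).mono hsub).intervalIntegrable
    have hD : ∀ t ∈ Set.uIcc a b, HasDerivAt (fun t : ℝ => (1 + t) ^ p / p) ((1 + t) ^ (p - 1)) t := by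
      intro t ht
      have h1 : (0:ℝ) < 1 + t := hpos t (hsub ht)
      have h2 : HasDerivAt (fun t : ℝ => 1 + t) 1 t := by
        simpa using (hasDerivAt_id t).const_add 1
      have h3 : HasDerivAt (fun x : ℝ => x ^ p) (p * (1 + t) ^ (p - 1)) (1 + t) :=
        Real.hasDerivAt_rpow_const (Or.inl h1.ne')
      have h4 := (h3.comp t h2).div_const p
      have h5 : p * (1 + t) ^ (p - 1) * 1 / p = (1 + t) ^ (p - 1) := by
        rw [mul_one, mul_div_cancel_left₀ _ hp]
      rw [h5] at h4
      exact h4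
    rw [integral_eq_sub_of_hasDerivAt hD hInt]
    ring
  -- differentiability of w at positive points
  have hwd : ∀ x : ℝ, 0 < x → HasDerivAt w (deriv w x) x := by
    intro x hx
    exact ((hw.differentiableOn one_ne_zero x hx.le).differentiableAt
      (Ici_mem_nhds hx)).hasDerivAt
  -- FTC for w
  have key : ∀ s : ℝ, 0 ≤ s → s ≤ r → w r - w s = ∫ t in s..r, deriv w t := by
    intro s hs hsr
    exact (integral_eq_sub_of_hasDeriv_right_of_le hsr
      (hw.continuousOn.mono (fun x hx => hs.trans hx.1))
      (fun x hx => (hwd x (lt_of_le_of_lt hs hx.1)).hasDerivWithinAt)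
      (hii s r hs hsr)).symm
  -- main pointwise estimate
  have key2 : ∀ s : ℝ, 0 ≤ s → s ≤ r →
      |w r - w s| ≤ N * ((1 + s) ^ (δ - 1) - (1 + r) ^ (δ - 1)) / (1 - δ) := by
    intro s hs hsr
    have hsub : Set.uIcc s r ⊆ Set.Ici 0 := by
      rw [Set.uIcc_of_le hsr]; exact fun x hx => hs.trans hx.1
    rw [key s hs hsr]
    have h1 : |∫ t in s..r, deriv w t| ≤ ∫ t in s..r, N * (1 + t) ^ (δ - 2) := by
      refine (abs_integral_le_integral_abs hsr).trans ?_
      refine integral_mono_on hsr ((hii s r hs hsr).abs)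
        ((((hcpow (δ - 2)).mono hsub).intervalIntegrable).const_mul N) ?_
      intro t ht
      exact hptw t (hs.trans ht.1)
    have h2 : ∫ t in s..r, N * (1 + t) ^ (δ - 2)
        = N * ((1 + s) ^ (δ - 1) - (1 + r) ^ (δ - 1)) / (1 - δ) := by
      rw [intervalIntegral.integral_const_mul, show δ - 2 = (δ - 1) - 1 by ring,
        hrpowInt (δ - 1) s r hs hsr (by linarith)]
      have hp : δ - 1 ≠ 0 := by linarith
      have hq : (1:ℝ) - δ ≠ 0 := by linarith
      field_simp
      ring
    rw [h2] at h1
    exact h1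
  -- linear pointwise estimate
  have keyA : ∀ s ∈ Set.Icc (0:ℝ) r, |w r - w s| ≤ N * (r - s) := by
    rintro s ⟨hs, hsr⟩
    rw [key s hs hsr]
    have := intervalIntegral.norm_integral_le_of_norm_le_const
      (a := s) (b := r) (C := N) (f := deriv w) ?_
    · rw [Real.norm_eq_abs] at this
      rw [abs_of_nonneg (show (0:ℝ) ≤ r - s by linarith)] at this
      linarith [this]
    · intro x hx
      rw [Set.uIoc_of_le hsr] at hx
      simpa using hbN x (hs.trans hx.1.le)
  -- decay pointwise estimate
  have keyB : ∀ s ∈ Set.Icc (0:ℝ) r, |w r - w s| ≤ N / (1 - δ) * (1 + s) ^ (δ - 1) := by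
    rintro s ⟨hs, hsr⟩
    refine (key2 s hs hsr).trans ?_
    rw [show N / (1 - δ) * (1 + s) ^ (δ - 1) = N * (1 + s) ^ (δ - 1) / (1 - δ) by ring]
    have hmul : N * ((1 + s) ^ (δ - 1) - (1 + r) ^ (δ - 1)) ≤ N * (1 + s) ^ (δ - 1) :=
      mul_le_mul_of_nonneg_left (sub_le_self _ (Real.rpow_nonneg (by linarith) _)) hN0
    gcongr
  -- reduction to an averaged bound
  have hwint : IntervalIntegrable w volume 0 r := by
    apply ContinuousOn.intervalIntegrable
    apply hw.continuousOn.mono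
    rw [Set.uIcc_of_le hr.le]
    exact fun x hx => hx.1
  have hEq : w r - (1 / r) * ∫ s in (0:ℝ)..r, w s
      = (1 / r) * ∫ s in (0:ℝ)..r, (w r - w s) := by
    rw [intervalIntegral.integral_sub intervalIntegrable_const hwint,
      intervalIntegral.integral_const]
    have hr0 : r ≠ 0 := ne_of_gt hr
    simp only [smul_eq_mul, sub_zero]
    field_simp
  have Emain : ∀ g : ℝ → ℝ, IntervalIntegrable g volume 0 r →
      (∀ s ∈ Set.Icc (0:ℝ) r, |w r - w s| ≤ g s) →
      |w r - (1 / r) * ∫ s in (0:ℝ)..r, w s| ≤ (1 / r) * ∫ s in (0:ℝ)..r, g s := by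
    intro g hg hpt
    rw [hEq, abs_mul, abs_of_pos (by positivity : (0:ℝ) < 1 / r)]
    refine mul_le_mul_of_nonneg_left ?_ (by positivity)
    refine (abs_integral_le_integral_abs hr.le).trans ?_
    exact integral_mono_on hr.le ((intervalIntegrable_const.sub hwint).abs) hg hpt
  -- quantities
  have hd0 : 0 ≤ deltaPlus δ := le_max_right _ _
  have hd1 : deltaPlus δ < 1 := max_lt hδ one_pos
  have hP : (0:ℝ) < (1 + r) ^ (2 - deltaPlus δ) := Real.rpow_pos_of_pos (by linarith) _
  have hL1 : (1:ℝ) ≤ Real.log (Real.exp 1 + r) := by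
    rw [Real.le_log_iff_exp_le (by positivity)]
    linarith [hr.le]
  have hLχ : (1:ℝ) ≤ Real.log (Real.exp 1 + r) ^ chi δ := by
    unfold chi
    split_ifs
    · rw [Real.rpow_one]; exact hL1
    · simp
  rcases le_or_gt r 1 with hr1 | hr1
  · -- small r
    have hgint : IntervalIntegrable (fun s => N * (r - s)) volume 0 r :=
      (intervalIntegrable_const.sub intervalIntegrable_id).const_mul N
    have hE := Emain _ hgint keyA
    have hval : (1 / r) * ∫ s in (0:ℝ)..r, N * (r - s) = N * r / 2 := by
      rw [intervalIntegral.integral_const_mul, intervalIntegral.integral_sub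
        intervalIntegrable_const intervalIntegrable_id, intervalIntegral.integral_const,
        integral_id]
      have hr0 : r ≠ 0 := ne_of_gt hr
      simp only [smul_eq_mul, sub_zero]
      field_simp
      ring
    rw [hval] at hE
    refine hE.trans ?_
    have h4 : (1 + r) ^ (2 - deltaPlus δ) ≤ 4 := by
      calc (1 + r) ^ (2 - deltaPlus δ) ≤ 2 ^ (2 - deltaPlus δ) :=
            Real.rpow_le_rpow (by linarith) (by linarith) (by linarith)
        _ ≤ 2 ^ (2:ℝ) := Real.rpow_le_rpow_of_exponent_le one_le_two (by linarith)
        _ = 4 := by norm_num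
    have hΦ : r / 4 ≤ r * Real.log (Real.exp 1 + r) ^ chi δ / (1 + r) ^ (2 - deltaPlus δ) :=
      div_le_div₀ (by positivity) (le_mul_of_one_le_right hr.le hLχ) hP h4
    calc N * r / 2 = 2 * (r / 4) * N := by ring
      _ ≤ C * (r * Real.log (Real.exp 1 + r) ^ chi δ / (1 + r) ^ (2 - deltaPlus δ)) * N := by
          refine mul_le_mul_of_nonneg_right ?_ hN0
          exact mul_le_mul hCge2 hΦ (by positivity) hC0.le
  · -- large r
    have hsub : Set.uIcc (0:ℝ) r ⊆ Set.Ici 0 := by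
      rw [Set.uIcc_of_le hr.le]
      exact fun x hx => hx.1
    have hgint : IntervalIntegrable (fun s => N / (1 - δ) * (1 + s) ^ (δ - 1)) volume 0 r :=
      (((hcpow (δ - 1)).mono hsub).intervalIntegrable).const_mul _
    have hE := Emain _ hgint keyB
    have hIval : ∫ s in (0:ℝ)..r, N / (1 - δ) * (1 + s) ^ (δ - 1)
        = N / (1 - δ) * ∫ s in (0:ℝ)..r, (1 + s) ^ (δ - 1) :=
      intervalIntegral.integral_const_mul _ _
    rw [hIval] at hE
    have hr2 : (1 + r) * (1 + r) ≤ 4 * (r * r) := by nlinarith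
    rcases eq_or_ne δ 0 with hδ0 | hδ0
    · -- δ = 0
      subst hδ0
      have hlogval : ∫ s in (0:ℝ)..r, (1 + s) ^ ((0:ℝ) - 1) = Real.log (1 + r) := by
        have hInt : IntervalIntegrable (fun t : ℝ => (1 + t) ^ ((0:ℝ) - 1)) volume 0 r :=
          ((hcpow ((0:ℝ) - 1)).mono hsub).intervalIntegrable
        have hD : ∀ t ∈ Set.uIcc (0:ℝ) r,
            HasDerivAt (fun t : ℝ => Real.log (1 + t)) ((1 + t) ^ ((0:ℝ) - 1)) t := by
          intro t ht
          have h1 : (0:ℝ) < 1 + t := hpos t (hsub ht)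
          have h2 : HasDerivAt (fun t : ℝ => 1 + t) 1 t := by
            simpa using (hasDerivAt_id t).const_add 1
          have h3 := (Real.hasDerivAt_log h1.ne').comp t h2
          have h4 : (1 + t) ^ ((0:ℝ) - 1) = (1 + t)⁻¹ * 1 := by
            rw [show (0:ℝ) - 1 = -1 by norm_num, Real.rpow_neg_one, mul_one]
          rw [h4]
          exact h3
        rw [integral_eq_sub_of_hasDerivAt hD hInt]
        simp
      rw [hlogval] at hE
      refine hE.trans ?_
      rw [show chi (0:ℝ) = 1 by simp [chi], Real.rpow_one,
        show deltaPlus (0:ℝ) = 0 by simp [deltaPlus]]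
      simp only [sub_zero]
      have hC4 : (4:ℝ) ≤ C := by
        rw [hCdef]
        refine le_trans ?_ (le_max_right _ _)
        simp
      have hlogL : Real.log (1 + r) ≤ Real.log (Real.exp 1 + r) := by
        apply Real.log_le_log (by linarith)
        have := Real.add_one_le_exp (1:ℝ)
        linarith
      have hQ : (1 + r) ^ (2:ℝ) = (1 + r) * (1 + r) := by
        rw [show (2:ℝ) = ((2:ℕ):ℝ) by norm_num, Real.rpow_natCast]
        ring
      have hlog0 : 0 ≤ Real.log (1 + r) := Real.log_nonneg (by linarith)
      have hL0 : 0 ≤ Real.log (Real.exp 1 + r) := by linarith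
      rw [div_one, hQ,
        show 1 / r * (N * Real.log (1 + r)) = N * Real.log (1 + r) / r by ring,
        show C * (r * Real.log (Real.exp 1 + r) / ((1 + r) * (1 + r))) * N
          = C * r * Real.log (Real.exp 1 + r) * N / ((1 + r) * (1 + r)) by ring,
        div_le_div_iff₀ hr (by positivity)]
      have h1 : N * (Real.log (1 + r) * ((1 + r) * (1 + r)))
          ≤ N * (Real.log (Real.exp 1 + r) * (4 * (r * r))) :=
        mul_le_mul_of_nonneg_left (mul_le_mul hlogL hr2 (by positivity) hL0) hN0
      have h2 : 4 * (N * Real.log (Real.exp 1 + r) * (r * r))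
          ≤ C * (N * Real.log (Real.exp 1 + r) * (r * r)) :=
        mul_le_mul_of_nonneg_right hC4
          (mul_nonneg (mul_nonneg hN0 hL0) (mul_nonneg hr.le hr.le))
      nlinarith [h1, h2]
    · -- δ ≠ 0
      have hCd : 4 / (|δ| * (1 - δ)) ≤ C := by
        rw [hCdef, if_neg hδ0]
        exact le_max_right _ _
      have habs : (0:ℝ) < |δ| := abs_pos.mpr hδ0
      have hIcalc : ∫ s in (0:ℝ)..r, (1 + s) ^ (δ - 1) = ((1 + r) ^ δ - 1) / δ := by
        rw [hrpowInt δ 0 r le_rfl hr.le hδ0]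
        norm_num
      rw [hIcalc] at hE
      set A : ℝ := (1 + r) ^ deltaPlus δ with hA
      have hA0 : 0 < A := Real.rpow_pos_of_pos (by linarith) _
      clear_value A
      have hIle : ((1 + r) ^ δ - 1) / δ ≤ A / |δ| := by
        rcases hδ0.lt_or_gt with hneg | hposδ
        · have hdp : deltaPlus δ = 0 := max_eq_right hneg.le
          have hle1 : (1 + r) ^ δ ≤ 1 :=
            Real.rpow_le_one_of_one_le_of_nonpos (by linarith) hneg.le
          have hpos2 : (0:ℝ) < (1 + r) ^ δ := Real.rpow_pos_of_pos (by linarith) _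
          rw [hA, hdp, Real.rpow_zero, abs_of_neg hneg]
          rw [show ((1 + r) ^ δ - 1) / δ = (1 - (1 + r) ^ δ) / (-δ) by ring]
          exact div_le_div₀ (by norm_num) (by linarith) (by linarith) le_rfl
        · have hdp : deltaPlus δ = δ := max_eq_left hposδ.le
          rw [hA, hdp, abs_of_pos hposδ]
          have h01 : (0:ℝ) ≤ (1 + r) ^ δ := (Real.rpow_pos_of_pos (by linarith) _).le
          exact div_le_div₀ h01 (by linarith) hposδ le_rfl
      have hAP : A * (1 + r) ^ (2 - deltaPlus δ) = (1 + r) * (1 + r) := by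
        rw [hA, ← Real.rpow_add (by linarith : (0:ℝ) < 1 + r)]
        rw [show deltaPlus δ + (2 - deltaPlus δ) = (2:ℝ) by ring]
        rw [show (2:ℝ) = ((2:ℕ):ℝ) by norm_num, Real.rpow_natCast]
        ring
      refine hE.trans ?_
      have hchi : chi δ = 0 := by simp [chi, hδ0]
      rw [hchi, Real.rpow_zero, mul_one]
      have step1 : (1 / r) * (N / (1 - δ) * (((1 + r) ^ δ - 1) / δ))
          ≤ (1 / r) * (N / (1 - δ) * (A / |δ|)) := by
        refine mul_le_mul_of_nonneg_left ?_ (by positivity)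
        exact mul_le_mul_of_nonneg_left hIle (by positivity)
      refine step1.trans ?_
      have hAPle : A * (1 + r) ^ (2 - deltaPlus δ) ≤ 4 * (r * r) := by
        rw [hAP]; exact hr2
      have hne1 : (1:ℝ) - δ ≠ 0 := ne_of_gt h1δ
      have hne2 : |δ| ≠ 0 := ne_of_gt habs
      have hne3 : r ≠ 0 := ne_of_gt hr
      rw [show 1 / r * (N / (1 - δ) * (A / |δ|)) = N * A / ((1 - δ) * |δ| * r) by
          rw [div_eq_mul_inv (N * A), mul_inv, mul_inv]; ring,
        show C * (r / (1 + r) ^ (2 - deltaPlus δ)) * N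
          = C * r * N / (1 + r) ^ (2 - deltaPlus δ) by ring,
        div_le_div_iff₀ (by positivity) hP]
      have h1 : N * (A * (1 + r) ^ (2 - deltaPlus δ)) ≤ N * (4 * (r * r)) :=
        mul_le_mul_of_nonneg_left hAPle hN0
      have hCd' : 4 ≤ C * (|δ| * (1 - δ)) := (div_le_iff₀ (by positivity)).mp hCd
      have h2 : 4 * (N * (r * r)) ≤ C * (|δ| * (1 - δ)) * (N * (r * r)) :=
        mul_le_mul_of_nonneg_right hCd' (by positivity)
      linarith [h1, h2]
end
end

section
/- Let δ ∈ [−1, 1/2). For every ε > 0 there exists γ > 0 such that: if h(u,r) is continuous on [0,U]×[0,∞), continuously differentiable in r, and X_δ := ‖∂_r h‖_{L_U^∞ L_r^{∞,2−δ}} < γ, then for all (u,r) ∈ [0,U]×[0,∞): G(u,r) ≤ −(1−ε)·r and |G(u,r)| ≤ (1+ε)·r. -/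
noncomputable section

section GEstimatesAux

open Set MeasureTheory intervalIntegral

lemma rpow_aux_cont (X : ℝ) (p : ℝ) {σ : ℝ} (hσ : 0 ≤ σ) :
    ContinuousAt (fun σ : ℝ => X * (1+σ) ^ (p : ℝ)) σ := by
  have h1 : ContinuousAt (fun σ : ℝ => 1 + σ) σ := (continuous_const.add continuous_id).continuousAt
  have h2 : ContinuousAt (fun y : ℝ => y ^ (p:ℝ)) (1+σ) :=
    Real.continuousAt_rpow_const _ _ (Or.inl (by positivity))
  exact continuousAt_const.mul (h2.comp h1)

lemma diff_bound (φ : ℝ → ℝ) (X : ℝ) (hX0 : 0 ≤ X)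
    (hc : ContinuousOn φ (Set.Ici 0))
    (hd : ∀ x ∈ Set.Ioi (0:ℝ), HasDerivAt φ (deriv φ x) x)
    (hb : ∀ σ, 0 ≤ σ → |deriv φ σ| ≤ X * (1+σ) ^ (-(3/2) : ℝ))
    {t s : ℝ} (ht : 0 ≤ t) (hts : t ≤ s) :
    |φ s - φ t| ≤ X * (s - t) ∧ |φ s - φ t| ≤ 2 * X * (1+t) ^ (-(1/2) : ℝ) := by
  -- integrability of deriv φ on [t,s]
  have hintd : IntervalIntegrable (deriv φ) volume t s := by
    rw [intervalIntegrable_iff, uIoc_of_le hts]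
    refine Integrable.mono' (g := fun _ => X) (integrableOn_const measure_Ioc_lt_top.ne)
      ((measurable_deriv φ).aestronglyMeasurable.restrict) ?_
    refine (ae_restrict_iff' measurableSet_Ioc).mpr (Filter.Eventually.of_forall ?_)
    intro σ hσ
    have hσ0 : (0:ℝ) ≤ σ := le_trans ht hσ.1.le
    calc ‖deriv φ σ‖ = |deriv φ σ| := rfl
      _ ≤ X * (1+σ) ^ (-(3/2) : ℝ) := hb σ hσ0
      _ ≤ X * 1 := by
          gcongr
          exact Real.rpow_le_one_of_one_le_of_nonpos (by linarith) (by norm_num)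
      _ = X := mul_one X
  -- FTC
  have hftc : φ s - φ t = ∫ σ in t..s, deriv φ σ := by
    rw [intervalIntegral.integral_eq_sub_of_hasDeriv_right_of_le hts
      (hc.mono (Icc_subset_Ici_self.trans (Ici_subset_Ici.mpr ht)))
      (fun x hx => ((hd x (lt_of_le_of_lt ht hx.1)).hasDerivWithinAt)) hintd]
  have hcontbd : ContinuousOn (fun σ : ℝ => X * (1+σ) ^ (-(3/2) : ℝ)) (Icc t s) :=
    fun σ hσ => (rpow_aux_cont X _ (le_trans ht hσ.1)).continuousWithinAt
  have hintbd : IntervalIntegrable (fun σ : ℝ => X * (1+σ) ^ (-(3/2) : ℝ)) volume t s := by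
    apply ContinuousOn.intervalIntegrable
    rwa [uIcc_of_le hts]
  have habs : |φ s - φ t| ≤ ∫ σ in t..s, X * (1+σ) ^ (-(3/2) : ℝ) := by
    rw [hftc]
    calc |∫ σ in t..s, deriv φ σ| ≤ ∫ σ in t..s, |deriv φ σ| :=
          intervalIntegral.abs_integral_le_integral_abs hts
      _ ≤ ∫ σ in t..s, X * (1+σ) ^ (-(3/2) : ℝ) := by
          apply intervalIntegral.integral_mono_on hts hintd.abs hintbd
          intro x hx; exact hb x (le_trans ht hx.1)
  constructor
  · refine habs.trans ?_
    calc (∫ σ in t..s, X * (1+σ) ^ (-(3/2) : ℝ)) ≤ ∫ _ in t..s, X := by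
          apply intervalIntegral.integral_mono_on hts hintbd (intervalIntegrable_const)
          intro x hx
          have : (1+x) ^ (-(3/2) : ℝ) ≤ 1 :=
            Real.rpow_le_one_of_one_le_of_nonpos (by linarith [le_trans ht hx.1]) (by norm_num)
          calc X * (1+x) ^ (-(3/2):ℝ) ≤ X * 1 := by gcongr
            _ = X := mul_one X
      _ = X * (s - t) := by rw [intervalIntegral.integral_const, smul_eq_mul]; ring
  · -- exact antiderivative
    have hanti : ∀ σ ∈ uIcc t s,
        HasDerivAt (fun σ : ℝ => (-2*X) * (1+σ) ^ (-(1/2) : ℝ)) (X * (1+σ) ^ (-(3/2) : ℝ)) σ := by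
      intro σ hσ
      rw [uIcc_of_le hts] at hσ
      have hσ0 : 0 ≤ σ := le_trans ht hσ.1
      have h1 : HasDerivAt (fun σ : ℝ => 1 + σ) 1 σ := (hasDerivAt_id σ).const_add 1
      have h2 := (h1.rpow_const (p := -(1/2)) (Or.inl (by positivity))).const_mul (-2*X)
      refine h2.congr_deriv ?_
      rw [show (-(1/2) : ℝ) - 1 = -(3/2) by norm_num]
      ring
    have hval : (∫ σ in t..s, X * (1+σ) ^ (-(3/2) : ℝ))
        = (-2*X) * (1+s) ^ (-(1/2):ℝ) - (-2*X) * (1+t) ^ (-(1/2):ℝ) :=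
      intervalIntegral.integral_eq_sub_of_hasDerivAt hanti hintbd
    refine habs.trans ?_
    rw [hval]
    have h3 : 0 ≤ X * (1+s) ^ (-(1/2):ℝ) :=
      mul_nonneg hX0 (Real.rpow_nonneg (by linarith [le_trans ht hts]) _)
    nlinarith [Real.rpow_nonneg (show (0:ℝ) ≤ 1+t by linarith) (-(1/2):ℝ)]

lemma bar_bound (φ : ℝ → ℝ) (X : ℝ) (hX0 : 0 ≤ X)
    (hc : ContinuousOn φ (Set.Ici 0))
    (hd1 : ∀ t s : ℝ, 0 ≤ t → t ≤ s → |φ s - φ t| ≤ X * (s - t))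
    (hd2 : ∀ t s : ℝ, 0 ≤ t → t ≤ s → |φ s - φ t| ≤ 2 * X * (1+t) ^ (-(1/2) : ℝ))
    {s : ℝ} (hs : 0 < s) :
    |φ s - (1/s) * ∫ t in (0:ℝ)..s, φ t| ≤ X * s ∧
      |φ s - (1/s) * ∫ t in (0:ℝ)..s, φ t| ≤ 4 * X * (1+s) ^ (-(1/2) : ℝ) := by
  have hφint : IntervalIntegrable φ volume 0 s := by
    apply ContinuousOn.intervalIntegrable
    rw [uIcc_of_le hs.le]
    exact hc.mono (Icc_subset_Ici_self)
  have hJ : φ s - (1/s) * ∫ t in (0:ℝ)..s, φ t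
      = (1/s) * ∫ t in (0:ℝ)..s, (φ s - φ t) := by
    rw [intervalIntegral.integral_sub intervalIntegrable_const hφint,
      intervalIntegral.integral_const, smul_eq_mul]
    field_simp
    ring
  have hcontd : ContinuousOn (fun t => |φ s - φ t|) (uIcc 0 s) := by
    rw [uIcc_of_le hs.le]
    exact (continuousOn_const.sub (hc.mono Icc_subset_Ici_self)).abs
  have habs : |∫ t in (0:ℝ)..s, (φ s - φ t)| ≤ ∫ t in (0:ℝ)..s, |φ s - φ t| :=
    intervalIntegral.abs_integral_le_integral_abs hs.le
  have hint_abs : IntervalIntegrable (fun t => |φ s - φ t|) volume 0 s :=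
    hcontd.intervalIntegrable
  constructor
  · -- first bound
    have h1 : (∫ t in (0:ℝ)..s, |φ s - φ t|) ≤ ∫ t in (0:ℝ)..s, X * (s - t) := by
      apply intervalIntegral.integral_mono_on hs.le hint_abs
      · exact (continuousOn_const.mul (continuousOn_const.sub (continuousOn_id))).intervalIntegrable
      · intro t htm; exact hd1 t s htm.1 htm.2
    have h2 : (∫ t in (0:ℝ)..s, X * (s - t)) = X * (s^2/2) := by
      have : (∫ t in (0:ℝ)..s, X * (s - t)) = X * ∫ t in (0:ℝ)..s, (s - t) :=
        intervalIntegral.integral_const_mul _ _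
      rw [this, intervalIntegral.integral_sub intervalIntegrable_const
        (continuous_id'.intervalIntegrable 0 s), integral_id, intervalIntegral.integral_const,
        smul_eq_mul]
      ring
    rw [hJ, abs_mul, abs_of_pos (by positivity : (0:ℝ) < 1/s)]
    calc (1/s) * |∫ t in (0:ℝ)..s, (φ s - φ t)| ≤ (1/s) * (X * (s^2/2)) := by
          apply mul_le_mul_of_nonneg_left (habs.trans (h1.trans h2.le)) (by positivity)
      _ ≤ X * s := by
          have he : (1/s) * (X * (s^2/2)) = X*s/2 := by field_simp
          rw [he]
          nlinarith
  · -- second bound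
    have hanti : ∀ t ∈ uIcc (0:ℝ) s,
        HasDerivAt (fun t : ℝ => (4*X) * (1+t) ^ ((1/2) : ℝ)) (2 * X * (1+t) ^ (-(1/2) : ℝ)) t := by
      intro t htm
      rw [uIcc_of_le hs.le] at htm
      have h1 : HasDerivAt (fun t : ℝ => 1 + t) 1 t := (hasDerivAt_id t).const_add 1
      have hpos : (0:ℝ) < 1 + t := by linarith [htm.1]
      have h2 := (h1.rpow_const (p := (1/2)) (Or.inl (ne_of_gt hpos))).const_mul (4*X)
      refine h2.congr_deriv ?_
      rw [show ((1/2) : ℝ) - 1 = -(1/2) by norm_num]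
      ring
    have hbcont : ContinuousOn (fun t : ℝ => 2 * X * (1+t) ^ (-(1/2) : ℝ)) (uIcc 0 s) := by
      rw [uIcc_of_le hs.le]
      intro t htm
      have h1 : ContinuousAt (fun t : ℝ => 1 + t) t := (continuous_const.add continuous_id).continuousAt
      have h2 : ContinuousAt (fun y : ℝ => y ^ (-(1/2):ℝ)) (1+t) :=
        Real.continuousAt_rpow_const _ _ (Or.inl (by intro hq; nlinarith [htm.1]))
      exact (continuousAt_const.mul (h2.comp h1)).continuousWithinAt
    have hintb : IntervalIntegrable (fun t : ℝ => 2 * X * (1+t) ^ (-(1/2) : ℝ)) volume 0 s :=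
      hbcont.intervalIntegrable
    have hval : (∫ t in (0:ℝ)..s, 2 * X * (1+t) ^ (-(1/2) : ℝ))
        = (4*X) * (1+s) ^ ((1/2):ℝ) - (4*X) * (1+0) ^ ((1/2):ℝ) :=
      intervalIntegral.integral_eq_sub_of_hasDerivAt hanti hintb
    have h1 : (∫ t in (0:ℝ)..s, |φ s - φ t|) ≤ (4*X) * ((1+s) ^ ((1/2):ℝ) - 1) := by
      calc (∫ t in (0:ℝ)..s, |φ s - φ t|) ≤ ∫ t in (0:ℝ)..s, 2 * X * (1+t) ^ (-(1/2) : ℝ) := by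
            apply intervalIntegral.integral_mono_on hs.le hint_abs hintb
            intro t htm; exact hd2 t s htm.1 htm.2
        _ = (4*X) * ((1+s) ^ ((1/2):ℝ) - 1) := by
            rw [hval, show ((1:ℝ)+0) = 1 by norm_num, Real.one_rpow]; ring
    -- key inequality: (1+s)^{1/2} - 1 ≤ s * (1+s)^{-1/2}
    set a : ℝ := (1+s) ^ ((1/2):ℝ) with ha
    have haa : a * a = 1 + s := by
      rw [ha, ← Real.rpow_add (by linarith)]
      norm_num
    have ha1 : 1 ≤ a := Real.one_le_rpow (by linarith) (by norm_num)
    have hainv : (1+s) ^ (-(1/2) : ℝ) = a⁻¹ := by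
      rw [ha, ← Real.rpow_neg (by linarith)]
    have hkey : a - 1 ≤ s * a⁻¹ := by
      rw [← one_div, mul_one_div, le_div_iff₀ (by linarith : (0:ℝ) < a)]
      nlinarith
    have h2 : (4*X) * (a - 1) ≤ 4 * X * (s * a⁻¹) := by nlinarith
    rw [hJ, abs_mul, abs_of_pos (by positivity : (0:ℝ) < 1/s)]
    calc (1/s) * |∫ t in (0:ℝ)..s, (φ s - φ t)| ≤ (1/s) * (4 * X * (s * a⁻¹)) := by
          apply mul_le_mul_of_nonneg_left (habs.trans (h1.trans h2)) (by positivity)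
      _ = 4 * X * (1+s) ^ (-(1/2) : ℝ) := by
          rw [hainv]; field_simp

lemma gint_integrable (g : ℝ → ℝ) (c : ℝ) (hc0 : 0 ≤ c)
    (hgc : ∀ s : ℝ, 0 < s → ContinuousAt g s)
    (hg0 : ∀ s : ℝ, 0 ≤ s → 0 ≤ g s)
    (hb1 : ∀ s : ℝ, 0 ≤ s → g s ≤ c * s)
    {T : ℝ} (hT : 0 ≤ T) : IntervalIntegrable g volume 0 T := by
  rw [intervalIntegrable_iff, uIoc_of_le hT]
  have hmeas : AEStronglyMeasurable g (volume.restrict (Ioc 0 T)) :=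
    ContinuousOn.aestronglyMeasurable (fun x hx => (hgc x hx.1).continuousWithinAt)
      measurableSet_Ioc
  refine Integrable.mono' (g := fun _ => c * T)
    (integrableOn_const measure_Ioc_lt_top.ne) hmeas ?_
  refine (ae_restrict_iff' measurableSet_Ioc).mpr (Filter.Eventually.of_forall ?_)
  intro x hx
  have h0 : 0 ≤ g x := hg0 x hx.1.le
  have h1 : g x ≤ c * x := hb1 x hx.1.le
  have : c * x ≤ c * T := by nlinarith [hx.2]
  calc ‖g x‖ = g x := by rw [Real.norm_eq_abs, abs_of_nonneg h0]
    _ ≤ c * T := le_trans h1 this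

lemma gint_bound1 (g : ℝ → ℝ) (c : ℝ) (hc0 : 0 ≤ c)
    (hgc : ∀ s : ℝ, 0 < s → ContinuousAt g s)
    (hg0 : ∀ s : ℝ, 0 ≤ s → 0 ≤ g s)
    (hb1 : ∀ s : ℝ, 0 ≤ s → g s ≤ c * s)
    {r : ℝ} (hr : 0 ≤ r) : (∫ s in (0:ℝ)..r, g s) ≤ c * r^2/2 := by
  have h1 : (∫ s in (0:ℝ)..r, g s) ≤ ∫ s in (0:ℝ)..r, c * s := by
    apply intervalIntegral.integral_mono_on hr (gint_integrable g c hc0 hgc hg0 hb1 hr)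
      ((continuous_const.mul continuous_id').intervalIntegrable 0 r)
    intro x hx; exact hb1 x hx.1
  have h2 : (∫ s in (0:ℝ)..r, c * s) = c * r^2/2 := by
    rw [intervalIntegral.integral_const_mul, integral_id]
    ring
  linarith

lemma gint_bound2 (g : ℝ → ℝ) (c : ℝ) (hc0 : 0 ≤ c)
    (hgc : ∀ s : ℝ, 0 < s → ContinuousAt g s)
    (hg0 : ∀ s : ℝ, 0 ≤ s → 0 ≤ g s)
    (hb1 : ∀ s : ℝ, 0 ≤ s → g s ≤ c * s)
    (hb2 : ∀ s : ℝ, 1 ≤ s → g s ≤ 16 * c / s^2)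
    {r : ℝ} (hr : 0 ≤ r) : (∫ s in (0:ℝ)..r, g s) ≤ 17 * c := by
  rcases le_or_gt r 1 with hr1 | hr1
  · have := gint_bound1 g c hc0 hgc hg0 hb1 hr
    have h2 : (∫ s in (0:ℝ)..r, g s) ≤ c * r^2/2 := this
    nlinarith [mul_nonneg hc0 (by nlinarith : (0:ℝ) ≤ 1 - r^2)]
  · have hint01 : IntervalIntegrable g volume 0 1 := gint_integrable g c hc0 hgc hg0 hb1 (by norm_num)
    have hint0r : IntervalIntegrable g volume 0 r := gint_integrable g c hc0 hgc hg0 hb1 hr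
    have hint1r : IntervalIntegrable g volume 1 r := by
      apply hint0r.mono_set
      rw [uIcc_of_le hr, uIcc_of_le hr1.le]
      exact Icc_subset_Icc (by norm_num) le_rfl
    have hsplit : (∫ s in (0:ℝ)..r, g s) = (∫ s in (0:ℝ)..1, g s) + ∫ s in (1:ℝ)..r, g s :=
      (intervalIntegral.integral_add_adjacent_intervals hint01 hint1r).symm
    have hA : (∫ s in (0:ℝ)..1, g s) ≤ c/2 := by
      have := gint_bound1 g c hc0 hgc hg0 hb1 (le_of_lt one_pos)
      linarith [this]
    have hbcont : ContinuousOn (fun s : ℝ => 16 * c / s^2) (uIcc 1 r) := by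
      rw [uIcc_of_le hr1.le]
      intro x hx
      exact (continuousAt_const.div (continuousAt_id.pow 2) (ne_of_gt (by simp only [id_eq]; nlinarith [hx.1] : (0:ℝ) < id x ^ 2))).continuousWithinAt
    have hintb : IntervalIntegrable (fun s : ℝ => 16 * c / s^2) volume 1 r :=
      hbcont.intervalIntegrable
    have hB1 : (∫ s in (1:ℝ)..r, g s) ≤ ∫ s in (1:ℝ)..r, 16 * c / s^2 := by
      apply intervalIntegral.integral_mono_on hr1.le hint1r hintb
      intro x hx; exact hb2 x hx.1
    have hanti : ∀ s ∈ uIcc (1:ℝ) r,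
        HasDerivAt (fun s : ℝ => -(16*c) * s⁻¹) (16 * c / s^2) s := by
      intro s hsm
      rw [uIcc_of_le hr1.le] at hsm
      have hs0 : s ≠ 0 := by intro hq; rw [hq] at hsm; linarith [hsm.1]
      have := (hasDerivAt_inv hs0).const_mul (-(16*c))
      refine this.congr_deriv ?_
      ring
    have hval : (∫ s in (1:ℝ)..r, 16 * c / s^2)
        = -(16*c) * r⁻¹ - (-(16*c)) * (1:ℝ)⁻¹ :=
      intervalIntegral.integral_eq_sub_of_hasDerivAt hanti hintb
    have hB2 : (∫ s in (1:ℝ)..r, 16 * c / s^2) ≤ 16 * c := by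
      rw [hval]
      have : 0 ≤ 16 * c * r⁻¹ := by positivity
      simp only [inv_one]
      linarith
    linarith [hsplit, hA, hB1, hB2]

lemma intint_of_bdd (f : ℝ → ℝ) (T C : ℝ) (hT : 0 ≤ T)
    (hm : ∀ s : ℝ, 0 < s → ContinuousAt f s)
    (hC : ∀ s : ℝ, 0 < s → s ≤ T → |f s| ≤ C) : IntervalIntegrable f volume 0 T := by
  rw [intervalIntegrable_iff, uIoc_of_le hT]
  have hmeas : AEStronglyMeasurable f (volume.restrict (Ioc 0 T)) :=
    ContinuousOn.aestronglyMeasurable (fun x hx => (hm x hx.1).continuousWithinAt)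
      measurableSet_Ioc
  refine Integrable.mono' (g := fun _ => C)
    (integrableOn_const measure_Ioc_lt_top.ne) hmeas ?_
  refine (ae_restrict_iff' measurableSet_Ioc).mpr (Filter.Eventually.of_forall ?_)
  intro x hx
  exact hC x hx.1 hx.2

lemma exp_le_aux (y : ℝ) (h0 : 0 ≤ y) (h1 : y ≤ 1) : Real.exp y ≤ 1 + 3*y := by
  have h2 : (1 - y) * Real.exp y ≤ 1 := by
    have h3 := Real.add_one_le_exp (-y)
    rw [Real.exp_neg y] at h3
    have h4 := mul_le_mul_of_nonneg_right h3 (Real.exp_pos y).le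
    rw [inv_mul_cancel₀ (ne_of_gt (Real.exp_pos y))] at h4
    nlinarith
  have h3 : Real.exp y ≤ Real.exp 1 := Real.exp_le_exp.mpr h1
  have he3 : Real.exp 1 ≤ 3 := le_of_lt (lt_of_lt_of_le Real.exp_one_lt_d9 (by norm_num))
  nlinarith [Real.exp_pos y]

end GEstimatesAux

open Set MeasureTheory intervalIntegral

set_option maxHeartbeats 1000000

/-- estimates for G. -/
theorem G_estimates (δ : ℝ) (hδ₁ : -1 ≤ δ) (hδ₂ : δ < 1/2) :
    ∀ ε > (0:ℝ), ∃ γ > (0:ℝ),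
      ∀ (U : ℝ) (h : ℝ → ℝ → ℝ),
        ContinuousOn (Function.uncurry h) (Set.Icc (0:ℝ) U ×ˢ Set.Ici (0:ℝ)) →
        (∀ u ∈ Set.Icc (0:ℝ) U, ContDiffOn ℝ 1 (h u) (Set.Ici 0)) →
        ∀ X : ℝ,
          (∀ u ∈ Set.Icc (0:ℝ) U, ∀ r ≥ (0:ℝ),
            (1 + r) ^ (2 - δ) * |deriv (h u) r| ≤ X) →
          X < γ →
          ∀ u ∈ Set.Icc (0:ℝ) U, ∀ r ≥ (0:ℝ),
            mG h u r ≤ -(1 - ε) * r ∧ |mG h u r| ≤ (1 + ε) * r := by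
  intro ε hε
  refine ⟨min (Real.sqrt (ε/100)) (1/10),
    lt_min (Real.sqrt_pos.mpr (by positivity)) (by norm_num), ?_⟩
  intro U h hcont hC1 X hX hXγ u hu r hr
  have hX0 : 0 ≤ X := le_trans (by positivity) (hX u hu 0 le_rfl)
  have hX2a : X^2 ≤ ε/100 := by
    have hXs : X < Real.sqrt (ε/100) := lt_of_lt_of_le hXγ (min_le_left _ _)
    nlinarith [Real.sq_sqrt (le_of_lt (by positivity : (0:ℝ) < ε/100)),
      Real.sqrt_nonneg (ε/100)]
  have hX2b : X^2 ≤ 1/100 := by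
    have : X < 1/10 := lt_of_lt_of_le hXγ (min_le_right _ _)
    nlinarith
  -- function-level unfoldings
  have hbar_eq : bar h u = fun x : ℝ => (1/x) * ∫ t in (0:ℝ)..x, h u t := rfl
  have hmf_eq : mf h u = fun x : ℝ =>
      Real.exp ((1/2) * ∫ s in (0:ℝ)..x, (h u s - bar h u s)^2/s) := rfl
  have hmft_eq : mft h u = fun x : ℝ =>
      (1/x) * ∫ s in (0:ℝ)..x, (1 - 3*s^2) * mf h u s := rfl
  -- regularity of φ = h u
  have hφc : ContinuousOn (h u) (Set.Ici 0) := (hC1 u hu).continuousOn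
  have hφd : ∀ x ∈ Set.Ioi (0:ℝ), HasDerivAt (h u) (deriv (h u) x) x := by
    intro x hx
    exact (((hC1 u hu).differentiableOn (by norm_num)).differentiableAt
      (Ici_mem_nhds hx)).hasDerivAt
  have hb : ∀ σ, 0 ≤ σ → |deriv (h u) σ| ≤ X * (1+σ) ^ (-(3/2) : ℝ) := by
    intro σ hσ
    have h32 : (1+σ) ^ ((3:ℝ)/2) ≤ (1+σ) ^ ((2:ℝ)-δ) :=
      Real.rpow_le_rpow_of_exponent_le (by linarith) (by linarith)
    have hpos : (0:ℝ) < (1+σ) ^ ((3:ℝ)/2) := Real.rpow_pos_of_pos (by linarith) _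
    have h2 : (1+σ) ^ ((3:ℝ)/2) * |deriv (h u) σ| ≤ X :=
      le_trans (mul_le_mul_of_nonneg_right h32 (abs_nonneg _)) (hX u hu σ hσ)
    rw [show (-(3/2) : ℝ) = -((3:ℝ)/2) by norm_num, Real.rpow_neg (by linarith),
      ← div_eq_mul_inv, le_div_iff₀ hpos, mul_comm]
    exact h2
  have hdb1 : ∀ t s : ℝ, 0 ≤ t → t ≤ s → |h u s - h u t| ≤ X * (s - t) :=
    fun t s ht hts => (diff_bound (h u) X hX0 hφc hφd hb ht hts).1
  have hdb2 : ∀ t s : ℝ, 0 ≤ t → t ≤ s → |h u s - h u t| ≤ 2 * X * (1+t) ^ (-(1/2) : ℝ) :=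
    fun t s ht hts => (diff_bound (h u) X hX0 hφc hφd hb ht hts).2
  have hbar1 : ∀ s : ℝ, 0 < s → |h u s - bar h u s| ≤ X * s := by
    intro s hs
    have := (bar_bound (h u) X hX0 hφc hdb1 hdb2 hs).1
    rw [hbar_eq]; exact this
  have hbar2 : ∀ s : ℝ, 0 < s → |h u s - bar h u s| ≤ 4 * X * (1+s) ^ (-(1/2) : ℝ) := by
    intro s hs
    have := (bar_bound (h u) X hX0 hφc hdb1 hdb2 hs).2
    rw [hbar_eq]; exact this
  -- pointwise bounds on the integrand g
  have hg0 : ∀ s : ℝ, 0 ≤ s → 0 ≤ (h u s - bar h u s)^2 / s :=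
    fun s hs => div_nonneg (sq_nonneg _) hs
  have hgb1 : ∀ s : ℝ, 0 ≤ s → (h u s - bar h u s)^2 / s ≤ X^2 * s := by
    intro s hs
    rcases eq_or_lt_of_le hs with hs0 | hs0
    · rw [← hs0]; simp
    · have hB := hbar1 s hs0
      have h2 : (h u s - bar h u s)^2 ≤ (X*s)^2 := by
        rw [← sq_abs]; exact pow_le_pow_left₀ (abs_nonneg _) hB 2
      rw [div_le_iff₀ hs0]
      nlinarith
  have hgb2 : ∀ s : ℝ, 1 ≤ s → (h u s - bar h u s)^2 / s ≤ 16 * X^2 / s^2 := by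
    intro s hs1
    have hs0 : (0:ℝ) < s := lt_of_lt_of_le one_pos hs1
    have h1s : (0:ℝ) < 1 + s := by linarith
    have hB := hbar2 s hs0
    have h2 : (h u s - bar h u s)^2 ≤ (4 * X * (1+s) ^ (-(1/2):ℝ))^2 := by
      rw [← sq_abs]; exact pow_le_pow_left₀ (abs_nonneg _) hB 2
    have h3 : ((1+s) ^ (-(1/2):ℝ))^2 = (1+s)⁻¹ := by
      rw [← Real.rpow_natCast ((1+s) ^ (-(1/2):ℝ)) 2, ← Real.rpow_mul h1s.le]
      norm_num [Real.rpow_neg_one]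
    have h4 : (4 * X * (1+s) ^ (-(1/2):ℝ))^2 = 16 * X^2 * (1+s)⁻¹ := by
      rw [mul_pow, mul_pow, h3]; ring
    have h5 : (h u s - bar h u s)^2 * s ≤ 16 * X^2 := by
      have h6 : (1+s)⁻¹ * s ≤ 1 := by
        rw [inv_mul_le_iff₀ h1s]; linarith
      calc (h u s - bar h u s)^2 * s ≤ (16 * X^2 * (1+s)⁻¹) * s :=
            mul_le_mul_of_nonneg_right (by rw [← h4]; exact h2) hs0.le
        _ = 16 * X^2 * ((1+s)⁻¹ * s) := by ring
        _ ≤ 16 * X^2 * 1 := mul_le_mul_of_nonneg_left h6 (by positivity)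
        _ = 16 * X^2 := mul_one _
    rw [div_le_div_iff₀ hs0 (by positivity)]
    nlinarith [mul_le_mul_of_nonneg_right h5 hs0.le]
  -- continuity of g on (0,∞)
  have hPd : ∀ s : ℝ, 0 < s →
      HasDerivAt (fun x => ∫ t in (0:ℝ)..x, h u t) (h u s) s := by
    intro s hs
    apply intervalIntegral.integral_hasDerivAt_right
    · apply ContinuousOn.intervalIntegrable
      rw [uIcc_of_le hs.le]
      exact hφc.mono Icc_subset_Ici_self
    · exact ContinuousOn.stronglyMeasurableAtFilter isOpen_Ioi
        (hφc.mono (Ioi_subset_Ici le_rfl)) s hs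
    · exact hφc.continuousAt (Ici_mem_nhds hs)
  have hgca : ∀ s : ℝ, 0 < s →
      ContinuousAt (fun s : ℝ => (h u s - bar h u s)^2 / s) s := by
    intro s hs
    have h1 : ContinuousAt (bar h u) s := by
      rw [hbar_eq]
      exact (continuousAt_const.div continuousAt_id (ne_of_gt hs)).mul
        (hPd s hs).continuousAt
    exact (((hφc.continuousAt (Ici_mem_nhds hs)).sub h1).pow 2).div
      continuousAt_id (ne_of_gt hs)
  have hGint : ∀ T : ℝ, 0 ≤ T →
      IntervalIntegrable (fun s : ℝ => (h u s - bar h u s)^2 / s) volume 0 T :=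
    fun T hT => gint_integrable _ (X^2) (by positivity) hgca hg0 hgb1 hT
  have hGnn : ∀ x : ℝ, 0 ≤ x → 0 ≤ ∫ s in (0:ℝ)..x, (h u s - bar h u s)^2 / s :=
    fun x hx => intervalIntegral.integral_nonneg hx (fun t ht1 => hg0 t ht1.1)
  have hGb1 : ∀ x : ℝ, 0 ≤ x →
      (∫ s in (0:ℝ)..x, (h u s - bar h u s)^2 / s) ≤ X^2 * x^2/2 :=
    fun x hx => gint_bound1 _ (X^2) (by positivity) hgca hg0 hgb1 hx
  have hGb2 : ∀ x : ℝ, 0 ≤ x →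
      (∫ s in (0:ℝ)..x, (h u s - bar h u s)^2 / s) ≤ 17 * X^2 :=
    fun x hx => gint_bound2 _ (X^2) (by positivity) hgca hg0 hgb1 hgb2 hx
  -- bounds on mf
  have hf1 : ∀ s : ℝ, 0 ≤ s → 1 ≤ mf h u s := by
    intro s hs
    rw [hmf_eq]
    refine Real.one_le_exp ?_
    have := hGnn s hs
    linarith
  have hfeb : ∀ s : ℝ, 0 ≤ s →
      mf h u s - 1 ≤ (3/2) * ∫ t in (0:ℝ)..s, (h u t - bar h u t)^2 / t := by
    intro s hs
    have hy0 : 0 ≤ (1/2) * ∫ t in (0:ℝ)..s, (h u t - bar h u t)^2 / t := by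
      have := hGnn s hs; linarith
    have hy1 : (1/2) * (∫ t in (0:ℝ)..s, (h u t - bar h u t)^2 / t) ≤ 1 := by
      have := hGb2 s hs; nlinarith
    have := exp_le_aux _ hy0 hy1
    rw [hmf_eq]
    simp only
    linarith
  have hfe1 : ∀ s : ℝ, 0 ≤ s → mf h u s - 1 ≤ (3/4) * (X^2 * s^2) := by
    intro s hs
    have := hfeb s hs
    have h2 := hGb1 s hs
    nlinarith
  have hfe2 : ∀ s : ℝ, 0 ≤ s → mf h u s - 1 ≤ (51/2) * X^2 := by
    intro s hs
    have := hfeb s hs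
    have h2 := hGb2 s hs
    nlinarith
  have hmf2 : ∀ s : ℝ, 0 ≤ s → mf h u s ≤ 2 := by
    intro s hs
    have := hfe2 s hs
    nlinarith
  -- the error term η
  have hη : ∀ s : ℝ, 0 ≤ s → |(1 - 3*s^2) * (mf h u s - 1)| ≤ 102 * X^2 * s^2 := by
    intro s hs
    have he0 : 0 ≤ mf h u s - 1 := by linarith [hf1 s hs]
    rw [abs_mul, abs_of_nonneg he0]
    have habs1 : |1 - 3*s^2| ≤ 1 + 3*s^2 :=
      abs_le.mpr ⟨by nlinarith, by nlinarith⟩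
    rcases le_or_gt s 1 with hs1 | hs1
    · have he := hfe1 s hs
      have hmul : |1 - 3*s^2| * (mf h u s - 1) ≤ (1 + 3*s^2) * ((3/4) * (X^2 * s^2)) :=
        mul_le_mul habs1 he he0 (by positivity)
      have hstep : (1 + 3*s^2) * ((3/4) * (X^2 * s^2)) ≤ 4 * ((3/4) * (X^2 * s^2)) := by
        have h1s : 1 + 3*s^2 ≤ 4 := by nlinarith
        exact mul_le_mul_of_nonneg_right h1s (by positivity)
      have hlast : 4 * ((3/4) * (X^2 * s^2)) ≤ 102 * X^2 * s^2 := by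
        nlinarith [mul_nonneg (sq_nonneg X) (sq_nonneg s)]
      linarith
    · have he := hfe2 s hs
      have hmul : |1 - 3*s^2| * (mf h u s - 1) ≤ (1 + 3*s^2) * ((51/2) * X^2) :=
        mul_le_mul habs1 he he0 (by positivity)
      have hstep : (1 + 3*s^2) * ((51/2) * X^2) ≤ (4*s^2) * ((51/2) * X^2) := by
        have h1s : 1 + 3*s^2 ≤ 4*s^2 := by nlinarith
        exact mul_le_mul_of_nonneg_right h1s (by positivity)
      have hlast : (4*s^2) * ((51/2) * X^2) = 102 * X^2 * s^2 := by ring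
      linarith
  -- continuity/integrability of ψ and η
  have hfca : ∀ s : ℝ, 0 < s → ContinuousAt (mf h u) s := by
    intro s hs
    have hsm : StronglyMeasurableAtFilter
        (fun s : ℝ => (h u s - bar h u s)^2/s) (nhds s) volume :=
      ContinuousOn.stronglyMeasurableAtFilter isOpen_Ioi
        (fun x hx => (hgca x hx).continuousWithinAt) s hs
    have hIca : ContinuousAt (fun x => ∫ t in (0:ℝ)..x, (h u t - bar h u t)^2/t) s :=
      (intervalIntegral.integral_hasDerivAt_right (hGint s hs.le) hsm
        (hgca s hs)).continuousAt
    rw [hmf_eq]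
    exact Real.continuous_exp.continuousAt.comp (continuousAt_const.mul hIca)
  have hψca : ∀ s : ℝ, 0 < s → ContinuousAt (fun s : ℝ => (1 - 3*s^2) * mf h u s) s :=
    fun s hs => ((continuous_const.sub (continuous_const.mul
      (continuous_pow 2))).continuousAt).mul (hfca s hs)
  have hψint : ∀ T : ℝ, 0 ≤ T →
      IntervalIntegrable (fun s : ℝ => (1 - 3*s^2) * mf h u s) volume 0 T := by
    intro T hT
    apply intint_of_bdd _ T ((1 + 3*T^2) * 2) hT hψca
    intro s hs hsT
    rw [abs_mul]
    have h1 : |1 - 3*s^2| ≤ 1 + 3*T^2 := by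
      rw [abs_le]; constructor <;> nlinarith
    have h2 : |mf h u s| ≤ 2 := by
      rw [abs_of_pos (by rw [hmf_eq]; exact Real.exp_pos _)]
      exact hmf2 s hs.le
    have := mul_le_mul h1 h2 (abs_nonneg _) (by nlinarith)
    linarith
  have hηca : ∀ s : ℝ, 0 < s →
      ContinuousAt (fun s : ℝ => (1 - 3*s^2) * (mf h u s - 1)) s :=
    fun s hs => ((continuous_const.sub (continuous_const.mul
      (continuous_pow 2))).continuousAt).mul ((hfca s hs).sub continuousAt_const)
  have hηint : ∀ T : ℝ, 0 ≤ T →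
      IntervalIntegrable (fun s : ℝ => (1 - 3*s^2) * (mf h u s - 1)) volume 0 T := by
    intro T hT
    apply intint_of_bdd _ T (102 * X^2 * T^2) hT hηca
    intro s hs hsT
    refine (hη s hs.le).trans ?_
    nlinarith [mul_le_mul_of_nonneg_left (mul_self_le_mul_self hs.le hsT)
      (by positivity : (0:ℝ) ≤ 102 * X^2)]
  -- case split on r
  rcases eq_or_lt_of_le hr with hr0 | hr0
  · -- r = 0
    have hmft0 : mft h u 0 = 0 := by
      rw [hmft_eq]; simp
    have hlim : Filter.Tendsto (mft h u) (nhdsWithin 0 (Ioi 0)) (nhds 1) := by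
      have hev : ∀ x ∈ Ioc (0:ℝ) 1, |mft h u x - 1| ≤ 3 * x^2 := by
        intro x hx
        have hx0 : (0:ℝ) < x := hx.1
        have heq : mft h u x - 1
            = (1/x) * ∫ s in (0:ℝ)..x, ((1 - 3*s^2) * mf h u s - 1) := by
          rw [intervalIntegral.integral_sub (hψint x hx0.le) intervalIntegrable_const,
            intervalIntegral.integral_const, smul_eq_mul, hmft_eq]
          simp only
          field_simp
          ring
        have hptw : ∀ s : ℝ, 0 ≤ s → |(1 - 3*s^2) * mf h u s - 1| ≤ 7 * s^2 := by
          intro s hs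
          have h3 : |(1 - 3*s^2) * mf h u s - 1|
              ≤ |(1 - 3*s^2) * (mf h u s - 1)| + 3*s^2 := by
            have hid : (1 - 3*s^2) * mf h u s - 1
                = (1 - 3*s^2) * (mf h u s - 1) + (-(3*s^2)) := by ring
            rw [hid]
            refine (abs_add_le _ _).trans ?_
            rw [abs_neg, abs_of_nonneg (by positivity : (0:ℝ) ≤ 3*s^2)]
          have h4 := hη s hs
          nlinarith [sq_nonneg s, mul_nonneg (sq_nonneg X) (sq_nonneg s)]
        have hint7 : IntervalIntegrable (fun s : ℝ => 7 * s^2) volume 0 x :=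
          (continuous_const.mul (continuous_pow 2)).intervalIntegrable 0 x
        have hintsub : IntervalIntegrable
            (fun s : ℝ => (1 - 3*s^2) * mf h u s - 1) volume 0 x :=
          (hψint x hx0.le).sub intervalIntegrable_const
        have habs2 : |∫ s in (0:ℝ)..x, ((1 - 3*s^2) * mf h u s - 1)|
            ≤ ∫ s in (0:ℝ)..x, 7 * s^2 := by
          refine (intervalIntegral.abs_integral_le_integral_abs hx0.le).trans ?_
          apply intervalIntegral.integral_mono_on hx0.le hintsub.abs hint7
          intro t ht; exact hptw t ht.1
        have hval : (∫ s in (0:ℝ)..x, 7 * s^2) = 7 * x^3 / 3 := by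
          rw [intervalIntegral.integral_const_mul, integral_pow]
          push_cast
          ring
        rw [heq, abs_mul, abs_of_pos (by positivity : (0:ℝ) < 1/x)]
        have hfin : (1/x) * |∫ s in (0:ℝ)..x, ((1 - 3*s^2) * mf h u s - 1)|
            ≤ (1/x) * (7 * x^3/3) :=
          mul_le_mul_of_nonneg_left (habs2.trans (le_of_eq hval)) (by positivity)
        have he2 : (1/x) * (7 * x^3/3) = 7 * x^2/3 := by
          field_simp
        rw [he2] at hfin
        nlinarith [sq_nonneg x]
      have h1 : Filter.Tendsto (fun x : ℝ => mft h u x - 1)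
          (nhdsWithin 0 (Ioi 0)) (nhds 0) := by
        apply squeeze_zero_norm' (a := fun x : ℝ => 3 * x^2)
        · filter_upwards [Ioc_mem_nhdsGT_of_mem
            (show (0:ℝ) ∈ Ico (0:ℝ) 1 by constructor <;> norm_num)] with x hx
          simpa [Real.norm_eq_abs] using hev x hx
        · have hcc : Continuous (fun x : ℝ => 3 * x^2) :=
            continuous_const.mul (continuous_pow 2)
          have h2 : Filter.Tendsto (fun x : ℝ => 3 * x^2) (nhds 0) (nhds 0) := by
            have := hcc.tendsto (0:ℝ)
            simpa using this
          exact h2.mono_left nhdsWithin_le_nhds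
      have h2 := h1.add_const 1
      simp only [sub_add_cancel, zero_add] at h2
      exact h2
    have hnd : ¬ DifferentiableAt ℝ (mft h u) 0 := by
      intro hd
      have h2 : Filter.Tendsto (mft h u) (nhdsWithin 0 (Ioi 0)) (nhds 0) := by
        have h3 := hd.continuousAt.tendsto
        rw [hmft0] at h3
        exact h3.mono_left nhdsWithin_le_nhds
      exact (by norm_num : (1:ℝ) ≠ 0) (tendsto_nhds_unique hlim h2)
    have hG0 : mG h u 0 = 0 := by
      rw [show mG h u 0 = (1/2) * deriv (mft h u) 0 from rfl,
        deriv_zero_of_not_differentiableAt hnd]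
      ring
    rw [← hr0, hG0]
    constructor
    · nlinarith
    · simp
  · -- r > 0
    have hsm : StronglyMeasurableAtFilter (fun s : ℝ => (1 - 3*s^2) * mf h u s)
        (nhds r) volume :=
      ContinuousOn.stronglyMeasurableAtFilter isOpen_Ioi
        (fun x hx => (hψca x hx).continuousWithinAt) r hr0
    have hF' : HasDerivAt (fun x => ∫ s in (0:ℝ)..x, (1 - 3*s^2) * mf h u s)
        ((1 - 3*r^2) * mf h u r) r :=
      intervalIntegral.integral_hasDerivAt_right (hψint r hr) hsm (hψca r hr0)
    have h1 : HasDerivAt (fun x : ℝ => 1/x) (-(r^2)⁻¹) r := by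
      simpa [one_div] using hasDerivAt_inv (ne_of_gt hr0)
    have hmft' : HasDerivAt (mft h u)
        (-(r^2)⁻¹ * (∫ s in (0:ℝ)..r, (1 - 3*s^2) * mf h u s)
          + (1/r) * ((1 - 3*r^2) * mf h u r)) r := by
      have h2 := h1.mul hF'
      rw [hmft_eq]
      exact h2
    have hderiv : deriv (mft h u) r
        = -(r^2)⁻¹ * (∫ s in (0:ℝ)..r, (1 - 3*s^2) * mf h u s)
          + (1/r) * ((1 - 3*r^2) * mf h u r) := hmft'.deriv
    have hFQ : (∫ s in (0:ℝ)..r, (1 - 3*s^2) * mf h u s)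
        = (r - r^3) + ∫ s in (0:ℝ)..r, (1 - 3*s^2) * (mf h u s - 1) := by
      have hintp : IntervalIntegrable (fun s : ℝ => 1 - 3*s^2) volume 0 r :=
        (continuous_const.sub (continuous_const.mul (continuous_pow 2))).intervalIntegrable 0 r
      calc (∫ s in (0:ℝ)..r, (1 - 3*s^2) * mf h u s)
          = ∫ s in (0:ℝ)..r, ((1 - 3*s^2) + (1 - 3*s^2) * (mf h u s - 1)) := by
            apply intervalIntegral.integral_congr
            intro s _
            ring
        _ = (∫ s in (0:ℝ)..r, (1 - 3*s^2))
            + ∫ s in (0:ℝ)..r, (1 - 3*s^2) * (mf h u s - 1) :=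
            intervalIntegral.integral_add hintp (hηint r hr)
        _ = (r - r^3) + ∫ s in (0:ℝ)..r, (1 - 3*s^2) * (mf h u s - 1) := by
            rw [intervalIntegral.integral_sub (g := fun s : ℝ => 3*s^2) intervalIntegrable_const
              ((continuous_const.mul (continuous_pow 2)).intervalIntegrable 0 r),
              intervalIntegral.integral_const, intervalIntegral.integral_const_mul,
              integral_pow, smul_eq_mul]
            push_cast
            ring
    have hQb : |∫ s in (0:ℝ)..r, (1 - 3*s^2) * (mf h u s - 1)| ≤ 34 * X^2 * r^3 := by
      have hint102 : IntervalIntegrable (fun s : ℝ => 102 * X^2 * s^2) volume 0 r :=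
        (continuous_const.mul (continuous_pow 2)).intervalIntegrable 0 r
      calc |∫ s in (0:ℝ)..r, (1 - 3*s^2) * (mf h u s - 1)|
          ≤ ∫ s in (0:ℝ)..r, |(1 - 3*s^2) * (mf h u s - 1)| :=
            intervalIntegral.abs_integral_le_integral_abs hr
        _ ≤ ∫ s in (0:ℝ)..r, 102 * X^2 * s^2 := by
            apply intervalIntegral.integral_mono_on hr (hηint r hr).abs hint102
            intro s hsm2
            exact hη s hsm2.1
        _ = 34 * X^2 * r^3 := by
            rw [intervalIntegral.integral_const_mul, integral_pow]
            ring
    have hψrb : |(1 - 3*r^2) * (mf h u r - 1)| ≤ 102 * X^2 * r^2 := hη r hr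
    have hkey : mG h u r + r = (1/2) * ((1 - 3*r^2) * (mf h u r - 1) / r
        - (∫ s in (0:ℝ)..r, (1 - 3*s^2) * (mf h u s - 1)) / r^2) := by
      rw [show mG h u r = (1/2) * deriv (mft h u) r from rfl, hderiv, hFQ]
      have hrne : r ≠ 0 := ne_of_gt hr0
      field_simp
      ring
    have hmb : |mG h u r + r| ≤ ε * r := by
      rw [hkey]
      have hb1' : |(1 - 3*r^2) * (mf h u r - 1) / r| ≤ 102 * X^2 * r := by
        rw [abs_div, abs_of_pos hr0, div_le_iff₀ hr0]
        nlinarith [hψrb]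
      have hb2' : |(∫ s in (0:ℝ)..r, (1 - 3*s^2) * (mf h u s - 1)) / r^2|
          ≤ 34 * X^2 * r := by
        rw [abs_div, abs_of_pos (by positivity : (0:ℝ) < r^2), div_le_iff₀ (by positivity : (0:ℝ) < r^2)]
        nlinarith [hQb]
      have htri : |(1 - 3*r^2) * (mf h u r - 1) / r
          - (∫ s in (0:ℝ)..r, (1 - 3*s^2) * (mf h u s - 1)) / r^2|
          ≤ 102 * X^2 * r + 34 * X^2 * r := by
        refine (abs_sub _ _).trans ?_
        linarith
      rw [abs_mul, abs_of_pos (by norm_num : (0:ℝ) < 1/2)]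
      have h68 : (1/2) * (102 * X^2 * r + 34 * X^2 * r) = 68 * X^2 * r := by ring
      calc (1/2) * |(1 - 3*r^2) * (mf h u r - 1) / r
            - (∫ s in (0:ℝ)..r, (1 - 3*s^2) * (mf h u s - 1)) / r^2|
          ≤ (1/2) * (102 * X^2 * r + 34 * X^2 * r) :=
            mul_le_mul_of_nonneg_left htri (by norm_num)
        _ = 68 * X^2 * r := h68
        _ ≤ ε * r := by nlinarith [mul_le_mul_of_nonneg_right hX2a hr0.le]
    have hh := abs_le.mp hmb
    constructor
    · nlinarith [hh.2]
    · rw [abs_le]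
      constructor
      · nlinarith [hh.1]
      · nlinarith [hh.2]
end
end

section
/- Let δ ∈ [−1, 1/2). There exist γ > 0 and C > 0 such that: if h(u,r) is continuous on [0,U]×[0,∞), continuously differentiable in r, and X_δ := ‖∂_r h‖_{L_U^∞ L_r^{∞,2−δ}} < γ, then for all (u,r) ∈ [0,U]×[0,∞): |J(u,r)| ≤ C · ([log(e+r)]^{2χ(δ)+1−H(δ)}/(1+r)^{1−2δ⁺}) · X_δ². -/
noncomputable section

open Set MeasureTheory Filter Topology

lemma rpow_cont {a b : ℝ} (c : ℝ) (hc : ∀ x ∈ Icc a b, (0:ℝ) < 1 + x) :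
    ContinuousOn (fun t : ℝ => (1+t) ^ (c:ℝ)) (Icc a b) := by
  apply ContinuousOn.rpow_const (by fun_prop)
  exact fun x hx => Or.inl (hc x hx).ne'

lemma integral_rpow_shift {c : ℝ} (hc : c ≠ -1) {s r : ℝ} (hs : 0 ≤ s) (hsr : s ≤ r) :
    ∫ t in s..r, (1+t) ^ c = ((1+r) ^ (c+1) - (1+s) ^ (c+1)) / (c+1) := by
  have hc1 : c + 1 ≠ 0 := by intro hh; apply hc; linarith
  have hder : ∀ t ∈ uIcc s r, HasDerivAt (fun t : ℝ => (1+t) ^ (c+1) / (c+1)) ((1+t) ^ c) t := by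
    intro t ht
    rw [uIcc_of_le hsr] at ht
    have h1 : (0:ℝ) < 1 + t := by have := ht.1; linarith
    have h2 := (((hasDerivAt_id t).const_add 1).rpow_const
      (p := c+1) (Or.inl h1.ne')).div_const (c+1)
    convert h2 using 1
    · rfl
    · rfl
    · rfl
    field_simp
    simp
  rw [intervalIntegral.integral_eq_sub_of_hasDerivAt hder]
  · field_simp
  · apply ContinuousOn.intervalIntegrable
    rw [uIcc_of_le hsr]
    exact rpow_cont c (fun x hx => by linarith [hx.1])

lemma qbound (h : ℝ → ℝ → ℝ) (u X δ : ℝ) (hδ : δ < 1)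
    (hcd : ContDiffOn ℝ 1 (h u) (Ici 0))
    (hd : ∀ t, 0 ≤ t → |deriv (h u) t| ≤ X * (1+t) ^ (δ-2)) (hX : 0 ≤ X) :
    ∀ r, 0 < r → |h u r - bar h u r| ≤ X * r ∧
      |h u r - bar h u r| ≤ X / ((1-δ)*r) * ∫ s in (0:ℝ)..r, (1+s) ^ (δ-1) := by
  intro r hr
  have hcont : ContinuousOn (h u) (Ici 0) := hcd.continuousOn
  have h1δ : (0:ℝ) < 1 - δ := by linarith
  set B : ℝ → ℝ := fun s => min (r - s) ((1/(1-δ)) * (1+s) ^ (δ-1)) with hB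
  have hBcont : ContinuousOn B (Icc 0 r) := by
    apply ContinuousOn.inf (by fun_prop)
    exact continuousOn_const.mul (rpow_cont (δ-1) (fun x hx => by linarith [hx.1]))
  have keyIoc : ∀ s, 0 < s → s ≤ r → |h u r - h u s| ≤ X * B s := by
    intro s hs hsr
    have hderiv : ∀ t ∈ uIcc s r, HasDerivAt (h u) (deriv (h u) t) t := by
      intro t ht
      rw [uIcc_of_le hsr] at ht
      have ht0 : 0 < t := lt_of_lt_of_le hs ht.1
      exact ((hcd.contDiffAt (Ici_mem_nhds ht0)).differentiableAt one_ne_zero).hasDerivAt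
    have hdint : IntervalIntegrable (deriv (h u)) volume s r := by
      rw [intervalIntegrable_iff, uIoc_of_le hsr]
      apply Integrable.mono' (integrableOn_const (C := X) measure_Ioc_lt_top.ne)
      · exact (measurable_deriv (h u)).aestronglyMeasurable.restrict
      · filter_upwards [ae_restrict_mem measurableSet_Ioc] with t ht
        rw [Real.norm_eq_abs]
        have ht0 : 0 < t := lt_trans hs ht.1
        calc |deriv (h u) t| ≤ X * (1+t) ^ (δ-2) := hd t ht0.le
          _ ≤ X * 1 := mul_le_mul_of_nonneg_left
              (Real.rpow_le_one_of_one_le_of_nonpos (by linarith) (by linarith)) hX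
          _ = X := mul_one X
    have hrint : IntervalIntegrable (fun t : ℝ => X * (1+t) ^ (δ-2)) volume s r := by
      apply ContinuousOn.intervalIntegrable
      rw [uIcc_of_le hsr]
      exact continuousOn_const.mul (rpow_cont (δ-2) (fun x hx => by linarith [hs, hx.1]))
    have habs : |h u r - h u s| ≤ ∫ t in s..r, X * (1+t) ^ (δ-2) := by
      rw [(intervalIntegral.integral_eq_sub_of_hasDerivAt hderiv hdint).symm]
      calc |∫ t in s..r, deriv (h u) t| ≤ ∫ t in s..r, |deriv (h u) t| :=
            intervalIntegral.abs_integral_le_integral_abs hsr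
        _ ≤ ∫ t in s..r, X * (1+t) ^ (δ-2) := by
            apply intervalIntegral.integral_mono_on hsr hdint.abs hrint
            intro t ht; exact hd t (le_trans hs.le ht.1)
    have hb1 : ∫ t in s..r, X * (1+t) ^ (δ-2) ≤ X * (r - s) := by
      calc ∫ t in s..r, X * (1+t) ^ (δ-2) ≤ ∫ _t in s..r, X := by
            apply intervalIntegral.integral_mono_on hsr hrint intervalIntegrable_const
            intro t ht
            calc X * (1+t) ^ (δ-2) ≤ X * 1 := mul_le_mul_of_nonneg_left
                  (Real.rpow_le_one_of_one_le_of_nonpos (by linarith [hs, ht.1]) (by linarith)) hX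
              _ = X := mul_one X
        _ = X * (r - s) := by rw [intervalIntegral.integral_const, smul_eq_mul, mul_comm]
    have hb2 : ∫ t in s..r, X * (1+t) ^ (δ-2) ≤ X * ((1/(1-δ)) * (1+s) ^ (δ-1)) := by
      rw [intervalIntegral.integral_const_mul, integral_rpow_shift (by intro hh; linarith) hs.le hsr,
        show δ-2+1 = δ-1 by ring]
      apply mul_le_mul_of_nonneg_left _ hX
      rw [show ((1+r) ^ (δ-1) - (1+s) ^ (δ-1))/(δ-1) = (1/(1-δ)) * ((1+s) ^ (δ-1) - (1+r) ^ (δ-1)) by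
        rw [div_eq_iff (by intro hh; apply absurd hh; intro hh2; linarith : δ-1 ≠ 0)]; field_simp; ring]
      apply mul_le_mul_of_nonneg_left _ (by positivity)
      exact sub_le_self _ (Real.rpow_nonneg (by linarith) _)
    rcases le_total (r - s) ((1/(1-δ)) * (1+s) ^ (δ-1)) with hmin | hmin
    · rw [hB]; simp only [min_eq_left hmin]; exact habs.trans hb1
    · rw [hB]; simp only [min_eq_right hmin]; exact habs.trans hb2
  have key : ∀ s ∈ Icc (0:ℝ) r, |h u r - h u s| ≤ X * B s := by
    intro s hsm
    rcases eq_or_lt_of_le hsm.1 with h0 | h0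
    · subst h0
      have hne : (𝓝[Ioc (0:ℝ) r] (0:ℝ)).NeBot := by
        rw [← mem_closure_iff_nhdsWithin_neBot, closure_Ioc hr.ne]
        exact ⟨le_refl 0, hr.le⟩
      have htd : Tendsto (fun s => |h u r - h u s|) (𝓝[Ioc (0:ℝ) r] 0)
          (𝓝 |h u r - h u 0|) := by
        apply ContinuousWithinAt.tendsto
        apply ContinuousWithinAt.abs
        apply ContinuousWithinAt.sub continuousWithinAt_const
        exact (hcont 0 self_mem_Ici).mono (fun x hx => hx.1.le)
      apply le_of_tendsto htd
      filter_upwards [self_mem_nhdsWithin] with s hs'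
      calc |h u r - h u s| ≤ X * B s := keyIoc s hs'.1 hs'.2
        _ ≤ X * B 0 := by
            apply mul_le_mul_of_nonneg_left _ hX
            rw [hB]
            apply min_le_min (by linarith [hs'.1])
            have e1 : (1+(0:ℝ)) ^ (δ-1) = 1 := by norm_num
            rw [e1, mul_one]
            calc (1/(1-δ)) * (1+s) ^ (δ-1) ≤ (1/(1-δ)) * 1 := mul_le_mul_of_nonneg_left
                  (Real.rpow_le_one_of_one_le_of_nonpos (by linarith [hs'.1]) (by linarith))
                  (by positivity)
              _ = 1/(1-δ) := mul_one _
    · exact keyIoc s h0 hsm.2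
  have hIr : IntervalIntegrable (h u) volume 0 r := by
    apply ContinuousOn.intervalIntegrable
    rw [uIcc_of_le hr.le]
    exact hcont.mono Icc_subset_Ici_self
  have hbar : h u r - bar h u r = (1/r) * ∫ s in (0:ℝ)..r, (h u r - h u s) := by
    rw [intervalIntegral.integral_sub intervalIntegrable_const hIr,
      intervalIntegral.integral_const, smul_eq_mul]
    simp only [bar]
    field_simp
    ring
  have hXBint : IntervalIntegrable (fun s => X * B s) volume 0 r :=
    (continuousOn_const.mul (by rwa [uIcc_of_le hr.le])).intervalIntegrable
  have habs2 : |h u r - bar h u r| ≤ (1/r) * ∫ s in (0:ℝ)..r, X * B s := by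
    rw [hbar, abs_mul, abs_of_pos (by positivity : (0:ℝ) < 1/r)]
    apply mul_le_mul_of_nonneg_left _ (by positivity)
    calc |∫ s in (0:ℝ)..r, (h u r - h u s)| ≤ ∫ s in (0:ℝ)..r, |h u r - h u s| :=
          intervalIntegral.abs_integral_le_integral_abs hr.le
      _ ≤ ∫ s in (0:ℝ)..r, X * B s := by
          apply intervalIntegral.integral_mono_on hr.le
            ((intervalIntegrable_const.sub hIr).abs) hXBint key
  constructor
  · calc |h u r - bar h u r| ≤ (1/r) * ∫ s in (0:ℝ)..r, X * B s := habs2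
      _ ≤ (1/r) * ∫ s in (0:ℝ)..r, X * (r - s) := by
          apply mul_le_mul_of_nonneg_left _ (by positivity)
          apply intervalIntegral.integral_mono_on hr.le hXBint
            (by apply ContinuousOn.intervalIntegrable; rw [uIcc_of_le hr.le]; fun_prop)
          intro s _
          exact mul_le_mul_of_nonneg_left (min_le_left _ _) hX
      _ = (1/r) * (X * (r*r - r^2/2)) := by
          rw [intervalIntegral.integral_const_mul,
            intervalIntegral.integral_sub intervalIntegrable_const
              (by apply ContinuousOn.intervalIntegrable; fun_prop),
            intervalIntegral.integral_const, smul_eq_mul, integral_id]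
          ring_nf
      _ ≤ X * r := by
          rw [show (1/r) * (X * (r*r - r^2/2)) = X * r / 2 by field_simp; ring]
          nlinarith
  · calc |h u r - bar h u r| ≤ (1/r) * ∫ s in (0:ℝ)..r, X * B s := habs2
      _ ≤ (1/r) * ∫ s in (0:ℝ)..r, X * ((1/(1-δ)) * (1+s) ^ (δ-1)) := by
          apply mul_le_mul_of_nonneg_left _ (by positivity)
          apply intervalIntegral.integral_mono_on hr.le hXBint
            (by
              apply ContinuousOn.intervalIntegrable; rw [uIcc_of_le hr.le]
              exact continuousOn_const.mul
                (continuousOn_const.mul (rpow_cont (δ-1) (fun x hx => by linarith [hx.1]))))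
          intro s _
          exact mul_le_mul_of_nonneg_left (min_le_right _ _) hX
      _ = X / ((1-δ)*r) * ∫ s in (0:ℝ)..r, (1+s) ^ (δ-1) := by
          rw [intervalIntegral.integral_const_mul, intervalIntegral.integral_const_mul]
          field_simp [h1δ.ne', hr.ne']

lemma Zid (I1 : ℝ → ℝ) (r : ℝ) (hr : 0 < r)
    (hcont : ContinuousOn I1 (Ioi 0))
    (hint : ∀ b, 0 ≤ b → IntervalIntegrable I1 volume 0 b) :
    (r + r^3) * (∫ t in (0:ℝ)..r, I1 t) - (∫ s in (0:ℝ)..r, (1+3*s^2) * (∫ t in (0:ℝ)..s, I1 t))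
      = ∫ t in (0:ℝ)..r, (t + t^3) * I1 t := by
  set KK : ℝ → ℝ := fun x => ∫ t in (0:ℝ)..x, I1 t with hKK
  have hKKc : ∀ b, 0 ≤ b → ContinuousOn KK (Icc 0 b) := by
    intro b hb
    have := intervalIntegral.continuousOn_primitive_interval
      (f := I1) (μ := volume) (a := 0) (b := b) ?_
    · rwa [uIcc_of_le hb] at this
    · rw [uIcc_of_le hb, integrableOn_Icc_iff_integrableOn_Ioc]
      have := (hint b hb)
      rwa [intervalIntegrable_iff, uIoc_of_le hb] at this
  have hKKd : ∀ t, 0 < t → HasDerivAt KK (I1 t) t := by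
    intro t ht
    exact intervalIntegral.integral_hasDerivAt_right (hint t ht.le)
      (hcont.stronglyMeasurableAtFilter isOpen_Ioi t ht) (hcont.continuousAt (Ioi_mem_nhds ht))
  have hKKcIoi : ContinuousOn KK (Ioi 0) :=
    fun t ht => ((hKKd t ht).differentiableAt.continuousAt).continuousWithinAt
  have hg1int : ∀ b, 0 ≤ b → IntervalIntegrable (fun s => (1+3*s^2) * KK s) volume 0 b := by
    intro b hb
    apply ContinuousOn.intervalIntegrable
    rw [uIcc_of_le hb]
    exact (by fun_prop : ContinuousOn (fun s : ℝ => 1+3*s^2) (Icc 0 b)).mul (hKKc b hb)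
  have hg2int : ∀ b, 0 ≤ b → IntervalIntegrable (fun t => (t + t^3) * I1 t) volume 0 b := by
    intro b hb
    apply IntervalIntegrable.continuousOn_mul (hint b hb)
    rw [uIcc_of_le hb]; fun_prop
  set L : ℝ → ℝ := fun x => (x + x^3) * KK x - ∫ s in (0:ℝ)..x, (1+3*s^2) * KK s with hL
  set R : ℝ → ℝ := fun x => ∫ t in (0:ℝ)..x, (t + t^3) * I1 t with hR
  have hLd : ∀ x, 0 < x → HasDerivAt L ((x + x^3) * I1 x) x := by
    intro x hx
    have d1 : HasDerivAt (fun y : ℝ => (y + y^3) * KK y)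
        ((1 + 3*x^2) * KK x + (x + x^3) * I1 x) x := by
      have := (((hasDerivAt_id x).add (hasDerivAt_pow 3 x)).mul (hKKd x hx))
      convert this using 1
      · rfl
      · rfl
      · rfl
      all_goals (push_cast; simp only [Pi.add_apply, id])
    have d2 : HasDerivAt (fun y : ℝ => ∫ s in (0:ℝ)..y, (1+3*s^2) * KK s)
        ((1 + 3*x^2) * KK x) x := by
      have hcont2 : ContinuousOn (fun s : ℝ => (1+3*s^2) * KK s) (Ioi 0) :=
        (by fun_prop : ContinuousOn (fun s : ℝ => 1+3*s^2) (Ioi 0)).mul hKKcIoi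
      exact intervalIntegral.integral_hasDerivAt_right (hg1int x hx.le)
        (hcont2.stronglyMeasurableAtFilter isOpen_Ioi x hx)
        (hcont2.continuousAt (Ioi_mem_nhds hx))
    have := d1.sub d2
    convert this using 1
    · rfl
    · rfl
    · rfl
    ring
  have hRd : ∀ x, 0 < x → HasDerivAt R ((x + x^3) * I1 x) x := by
    intro x hx
    have hcont2 : ContinuousOn (fun t : ℝ => (t + t^3) * I1 t) (Ioi 0) :=
      (by fun_prop : ContinuousOn (fun t : ℝ => t + t^3) (Ioi 0)).mul hcont
    exact intervalIntegral.integral_hasDerivAt_right (hg2int x hx.le)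
      (hcont2.stronglyMeasurableAtFilter isOpen_Ioi x hx)
      (hcont2.continuousAt (Ioi_mem_nhds hx))
  have hLc : ContinuousOn L (Icc 0 r) := by
    apply ContinuousOn.sub
    · exact (by fun_prop : ContinuousOn (fun x : ℝ => x + x^3) (Icc 0 r)).mul (hKKc r hr.le)
    · have := intervalIntegral.continuousOn_primitive_interval
        (f := fun s => (1+3*s^2) * KK s) (μ := volume) (a := 0) (b := r) ?_
      · rwa [uIcc_of_le hr.le] at this
      · rw [uIcc_of_le hr.le, integrableOn_Icc_iff_integrableOn_Ioc]
        have := hg1int r hr.le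
        rwa [intervalIntegrable_iff, uIoc_of_le hr.le] at this
  have hRc : ContinuousOn R (Icc 0 r) := by
    have := intervalIntegral.continuousOn_primitive_interval
      (f := fun t => (t + t^3) * I1 t) (μ := volume) (a := 0) (b := r) ?_
    · rwa [uIcc_of_le hr.le] at this
    · rw [uIcc_of_le hr.le, integrableOn_Icc_iff_integrableOn_Ioc]
      have := hg2int r hr.le
      rwa [intervalIntegrable_iff, uIoc_of_le hr.le] at this
  -- on [a, r] for 0 < a the difference L - R is constant
  have hconst : ∀ a, 0 < a → a ≤ r → L r - L a = R r - R a := by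
    intro a ha har
    have := eq_of_has_deriv_right_eq (f' := fun x => (x + x^3) * I1 x)
      (f := fun x => L x - L a) (g := fun x => R x - R a) (a := a) (b := r)
      ?_ ?_ ?_ ?_ (by simp) r (right_mem_Icc.2 har)
    · simpa using this
    · intro x hx
      exact ((hLd x (lt_of_lt_of_le ha hx.1)).sub_const (L a)).hasDerivWithinAt
    · intro x hx
      exact ((hRd x (lt_of_lt_of_le ha hx.1)).sub_const (R a)).hasDerivWithinAt
    · exact (hLc.mono (Icc_subset_Icc ha.le le_rfl)).sub continuousOn_const
    · exact (hRc.mono (Icc_subset_Icc ha.le le_rfl)).sub continuousOn_const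
  -- take a → 0⁺
  have hne : (𝓝[Ioc (0:ℝ) r] (0:ℝ)).NeBot := by
    rw [← mem_closure_iff_nhdsWithin_neBot, closure_Ioc hr.ne]
    exact ⟨le_refl 0, hr.le⟩
  have hL0 : L 0 = 0 := by simp [hL, hKK]
  have hR0 : R 0 = 0 := by simp [hR]
  have htd : Tendsto (fun a => L a - R a) (𝓝[Ioc (0:ℝ) r] 0) (𝓝 (L 0 - R 0)) := by
    apply ContinuousWithinAt.tendsto
    exact ((hLc 0 (left_mem_Icc.2 hr.le)).sub (hRc 0 (left_mem_Icc.2 hr.le))).mono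
      (fun x hx => ⟨hx.1.le, hx.2⟩)
  have htd2 : Tendsto (fun a => L a - R a) (𝓝[Ioc (0:ℝ) r] 0) (𝓝 (L r - R r)) := by
    apply Tendsto.congr' _ tendsto_const_nhds
    filter_upwards [self_mem_nhdsWithin] with a ha
    have := hconst a ha.1 ha.2
    linarith
  have := tendsto_nhds_unique htd2 htd
  rw [hL0, hR0] at this
  have hLR : L r = R r := by linarith
  simpa [hL, hR, hKK] using hLR

lemma int_inv_cube {r : ℝ} (hr : 1 ≤ r) : ∫ t in (1:ℝ)..r, 1/t^3 ≤ 1/2 := by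
  have hder : ∀ t ∈ uIcc (1:ℝ) r, HasDerivAt (fun t : ℝ => -1/(2*t^2)) (1/t^3) t := by
    intro t ht
    rw [uIcc_of_le hr] at ht
    have ht0 : (0:ℝ) < t := lt_of_lt_of_le one_pos ht.1
    have h2 : (t:ℝ)^2 ≠ 0 := pow_ne_zero 2 ht0.ne'
    have := ((hasDerivAt_pow 2 t).inv h2).const_mul (-(1/2) : ℝ)
    convert this using 1
    · rfl
    · rfl
    · funext y; simp only [Pi.inv_apply]; ring
    · push_cast; field_simp
  have hint : IntervalIntegrable (fun t : ℝ => 1/t^3) volume 1 r := by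
    apply ContinuousOn.intervalIntegrable
    rw [uIcc_of_le hr]
    intro t ht
    have ht0 : (0:ℝ) < t := lt_of_lt_of_le one_pos ht.1
    exact ContinuousWithinAt.div continuousWithinAt_const (continuousWithinAt_id.pow 3)
      (by positivity)
  rw [intervalIntegral.integral_eq_sub_of_hasDerivAt hder hint]
  have h1 : 0 ≤ 1/(2*r^2) := by positivity
  have h2 : -1/(2*r^2) - -1/(2*(1:ℝ)^2) = 1/2 - 1/(2*r^2) := by ring
  rw [h2]
  linarith

lemma int_inv_sq {r : ℝ} (hr : 1 ≤ r) : ∫ t in (1:ℝ)..r, 2/t^2 ≤ 2 := by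
  have hder : ∀ t ∈ uIcc (1:ℝ) r, HasDerivAt (fun t : ℝ => -2/t) (2/t^2) t := by
    intro t ht
    rw [uIcc_of_le hr] at ht
    have ht0 : (0:ℝ) < t := lt_of_lt_of_le one_pos ht.1
    have := (hasDerivAt_inv ht0.ne').const_mul (-2 : ℝ)
    convert this using 1
    · rfl
    · rfl
    · rfl
    all_goals field_simp
  have hint : IntervalIntegrable (fun t : ℝ => 2/t^2) volume 1 r := by
    apply ContinuousOn.intervalIntegrable
    rw [uIcc_of_le hr]
    intro t ht
    have ht0 : (0:ℝ) < t := lt_of_lt_of_le one_pos ht.1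
    exact ContinuousWithinAt.div continuousWithinAt_const (continuousWithinAt_id.pow 2)
      (by positivity)
  rw [intervalIntegral.integral_eq_sub_of_hasDerivAt hder hint]
  have hr0 : (0:ℝ) < r := lt_of_lt_of_le one_pos hr
  have h1 : 0 ≤ 2/r := by positivity
  have h2 : -2/r - -2/(1:ℝ) = 2 - 2/r := by ring
  rw [h2]
  linarith

lemma int_rpow_52 {r : ℝ} (hr : 1 ≤ r) : ∫ t in (1:ℝ)..r, 36*t^(-(5:ℝ)/2) ≤ 24 := by
  have hder : ∀ t ∈ uIcc (1:ℝ) r,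
      HasDerivAt (fun t : ℝ => -24*t^(-(3:ℝ)/2)) (36*t^(-(5:ℝ)/2)) t := by
    intro t ht
    rw [uIcc_of_le hr] at ht
    have ht0 : (0:ℝ) < t := lt_of_lt_of_le one_pos ht.1
    have := (Real.hasDerivAt_rpow_const (x := t) (p := -(3:ℝ)/2) (Or.inl ht0.ne')).const_mul
      (-24 : ℝ)
    convert this using 1
    · rfl
    · rfl
    rw [show -(3:ℝ)/2 - 1 = -(5:ℝ)/2 by norm_num]
    ring
  have hint : IntervalIntegrable (fun t : ℝ => 36*t^(-(5:ℝ)/2)) volume 1 r := by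
    apply ContinuousOn.intervalIntegrable
    rw [uIcc_of_le hr]
    apply ContinuousOn.mul continuousOn_const
    apply ContinuousOn.rpow_const continuousOn_id
    intro t ht
    exact Or.inl (lt_of_lt_of_le one_pos ht.1).ne'
  rw [intervalIntegral.integral_eq_sub_of_hasDerivAt hder hint]
  have hr0 : (0:ℝ) < r := lt_of_lt_of_le one_pos hr
  have h1 : 0 ≤ r^(-(3:ℝ)/2) := Real.rpow_nonneg hr0.le _
  have h2 : (1:ℝ)^(-(3:ℝ)/2) = 1 := Real.one_rpow _
  nlinarith

lemma log_sq_le {t : ℝ} (ht : 1 ≤ t) :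
    (Real.log (Real.exp 1 + t))^2 ≤ 36 * t^((1:ℝ)/2) := by
  have ht0 : (0:ℝ) < t := lt_of_lt_of_le one_pos ht
  have hx0 : (0:ℝ) < Real.exp 1 + t := by positivity
  have h1 : Real.log (Real.exp 1 + t) ≤ 4 * (Real.exp 1 + t)^((1:ℝ)/4) := by
    have h := Real.log_le_rpow_div hx0.le (by norm_num : (0:ℝ) < 1/4)
    have h2 : (Real.exp 1 + t)^((1:ℝ)/4)/(1/4) = 4*(Real.exp 1+t)^((1:ℝ)/4) := by ring
    linarith [h, h2.le]
  have he3 : Real.exp 1 ≤ 3 := by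
    have := Real.exp_one_lt_d9
    linarith
  have h4 : Real.exp 1 + t ≤ 4*t := by linarith
  have h5 : (Real.exp 1 + t)^((1:ℝ)/4) ≤ (4*t)^((1:ℝ)/4) :=
    Real.rpow_le_rpow hx0.le h4 (by norm_num)
  have h6 : (4*t)^((1:ℝ)/4) = 4^((1:ℝ)/4) * t^((1:ℝ)/4) :=
    Real.mul_rpow (by norm_num) ht0.le
  have h7 : (4:ℝ)^((1:ℝ)/4) ≤ 3/2 := by
    set x : ℝ := (4:ℝ)^((1:ℝ)/4) with hx
    have hxnn : 0 ≤ x := Real.rpow_nonneg (by norm_num) _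
    have e1 : x^(4:ℕ) = 4 := by
      rw [hx, ← Real.rpow_natCast ((4:ℝ)^((1:ℝ)/4)) 4, ← Real.rpow_mul (by norm_num)]
      norm_num
    nlinarith [sq_nonneg (x^2 - 2), sq_nonneg x, sq_nonneg (x - 3/2)]
  have hlog0 : 0 ≤ Real.log (Real.exp 1 + t) := by
    rw [show (0:ℝ) = Real.log 1 from (Real.log_one).symm]
    apply Real.log_le_log one_pos
    nlinarith [Real.exp_pos 1]
  have h8 : Real.log (Real.exp 1 + t) ≤ 6 * t^((1:ℝ)/4) := by
    have h9 : (4:ℝ)^((1:ℝ)/4) * t^((1:ℝ)/4) ≤ (3/2) * t^((1:ℝ)/4) :=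
      mul_le_mul_of_nonneg_right h7 (Real.rpow_nonneg ht0.le _)
    calc Real.log (Real.exp 1 + t) ≤ 4 * (Real.exp 1 + t)^((1:ℝ)/4) := h1
      _ ≤ 4 * ((4:ℝ)^((1:ℝ)/4) * t^((1:ℝ)/4)) := by
          apply mul_le_mul_of_nonneg_left _ (by norm_num)
          rw [← h6]
          exact h5
      _ ≤ 4 * ((3/2) * t^((1:ℝ)/4)) := mul_le_mul_of_nonneg_left h9 (by norm_num)
      _ = 6 * t^((1:ℝ)/4) := by ring
  have h10 : (t^((1:ℝ)/4))^(2:ℕ) = t^((1:ℝ)/2) := by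
    rw [← Real.rpow_natCast (t^((1:ℝ)/4)) 2, ← Real.rpow_mul ht0.le]
    norm_num
  calc (Real.log (Real.exp 1 + t))^2 ≤ (6 * t^((1:ℝ)/4))^2 :=
        pow_le_pow_left₀ hlog0 h8 2
    _ = 36 * (t^((1:ℝ)/4))^(2:ℕ) := by ring
    _ = 36 * t^((1:ℝ)/2) := by rw [h10]

set_option maxHeartbeats 2000000 in
lemma core (h : ℝ → ℝ → ℝ) (u X c : ℝ) (A W : ℝ → ℝ)
    (hcont : ContinuousOn (h u) (Ici 0))
    (hX : 0 ≤ X) (hc : 1 ≤ c) (hXc : X * c ≤ 1/5)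
    (hAcont : ContinuousOn A (Ici 0))
    (hq1 : ∀ t, 0 < t → |h u t - bar h u t| ≤ X * t)
    (hq2 : ∀ t, 0 < t → |h u t - bar h u t| ≤ X * c * A t / t)
    (htail : ∀ r, 1 ≤ r → (∫ t in (1:ℝ)..r, (A t)^2 / t^3) ≤ 24)
    (htail2 : ∀ r, 1 ≤ r → (∫ t in (1:ℝ)..r, (A t)^2) ≤ W r) :
    mJ h u 0 = 0 ∧
    (∀ r, 0 < r → r ≤ 1 → |mJ h u r| ≤ 2 * Real.exp 1 * c^2 * X^2 * r) ∧
    (∀ r, 1 ≤ r → |mJ h u r| ≤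
      Real.exp 1 * c^2 * X^2 * ((3/(2*r^2)) * (1/3 + W r) + (A r)^2 / r)) := by
  have hc0 : (0:ℝ) < c := lt_of_lt_of_le one_pos hc
  have hXc2 : X^2 * c^2 ≤ 1/25 := by nlinarith [mul_nonneg hX hc0.le]
  have hX2 : X^2 ≤ 1/25 := by nlinarith [mul_nonneg hX hc0.le]
  set q : ℝ → ℝ := fun t => h u t - bar h u t with hqdef
  set I1 : ℝ → ℝ := fun t => q t ^ 2 / t with hI1def
  set KK : ℝ → ℝ := fun x => ∫ t in (0:ℝ)..x, I1 t with hKKdef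
  set ff : ℝ → ℝ := fun x => Real.exp (KK x / 2) with hffdef
  have hffeq : mf h u = ff := by
    funext x
    simp only [mf, hffdef, hKKdef, hI1def, hqdef]
    congr 1
    ring
  set FF : ℝ → ℝ := fun x => ∫ s in (0:ℝ)..x, (1 - 3*s^2) * ff s with hFFdef
  -- basic bounds on I1
  have hq1' : ∀ t, 0 < t → q t ^ 2 ≤ X^2 * t^2 := by
    intro t ht
    rw [← sq_abs]
    calc |q t| ^ 2 ≤ (X * t) ^ 2 := by
          apply pow_le_pow_left₀ (abs_nonneg _) (hq1 t ht)
      _ = X^2 * t^2 := by ring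
  have hq2' : ∀ t, 0 < t → q t ^ 2 ≤ X^2 * c^2 * (A t)^2 / t^2 := by
    intro t ht
    rw [← sq_abs]
    calc |q t| ^ 2 ≤ (X * c * A t / t) ^ 2 := by
          apply pow_le_pow_left₀ (abs_nonneg _) (hq2 t ht)
      _ = X^2 * c^2 * (A t)^2 / t^2 := by ring
  have hI1_le : ∀ t, 0 < t → I1 t ≤ X^2 * t := by
    intro t ht
    rw [hI1def, div_le_iff₀ ht]
    calc q t ^ 2 ≤ X^2 * t^2 := hq1' t ht
      _ = X^2 * t * t := by ring
  have hI1_le2 : ∀ t, 0 < t → I1 t ≤ X^2 * c^2 * (A t)^2 / t^3 := by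
    intro t ht
    rw [hI1def, div_le_iff₀ ht, div_mul_eq_mul_div, le_div_iff₀ (by positivity)]
    calc q t ^ 2 * t^3 ≤ (X^2 * c^2 * (A t)^2 / t^2) * t^3 := by
          apply mul_le_mul_of_nonneg_right (hq2' t ht) (by positivity)
      _ = X^2 * c^2 * (A t)^2 * t := by field_simp
  have hI1_nonneg : ∀ t, 0 ≤ t → 0 ≤ I1 t := by
    intro t ht
    rcases eq_or_lt_of_le ht with h0 | h0
    · rw [hI1def]; simp [← h0]
    · rw [hI1def]; positivity
  -- continuity of I1 on (0, ∞)
  have hIIh : ∀ b, 0 ≤ b → IntervalIntegrable (h u) volume 0 b := by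
    intro b hb
    apply ContinuousOn.intervalIntegrable
    rw [uIcc_of_le hb]
    exact hcont.mono Icc_subset_Ici_self
  have hprim : ∀ t, 0 < t → HasDerivAt (fun s => ∫ x in (0:ℝ)..s, h u x) (h u t) t := by
    intro t ht
    exact intervalIntegral.integral_hasDerivAt_right (hIIh t ht.le)
      ((hcont.mono Ioi_subset_Ici_self).stronglyMeasurableAtFilter isOpen_Ioi t ht)
      ((hcont t (le_of_lt ht)).continuousAt (Ici_mem_nhds ht))
  have hq_cont : ContinuousOn q (Ioi 0) := by
    intro t ht
    apply ContinuousWithinAt.sub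
    · exact ((hcont t (mem_Ici.2 (le_of_lt ht))).continuousAt (Ici_mem_nhds ht)).continuousWithinAt
    · apply ContinuousAt.continuousWithinAt
      have hct : ContinuousAt (fun s : ℝ => (1/s) * ∫ x in (0:ℝ)..s, h u x) t := by
        apply ContinuousAt.mul
        · exact continuousAt_const.div continuousAt_id (ne_of_gt ht)
        · exact (hprim t ht).differentiableAt.continuousAt
      exact hct
  have hI1_cont : ContinuousOn I1 (Ioi 0) := by
    intro t ht
    exact ((hq_cont t ht).pow 2).div continuousWithinAt_id (ne_of_gt ht)
  have hI1_int : ∀ b, 0 ≤ b → IntervalIntegrable I1 volume 0 b := by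
    intro b hb
    rw [intervalIntegrable_iff, uIoc_of_le hb]
    apply Integrable.mono'
      (integrableOn_const measure_Ioc_lt_top.ne : IntegrableOn (fun _ => X^2*b) _ _)
    · exact (hI1_cont.mono Ioc_subset_Ioi_self).aestronglyMeasurable measurableSet_Ioc
    · filter_upwards [ae_restrict_mem measurableSet_Ioc] with t ht
      rw [Real.norm_eq_abs, abs_of_nonneg (hI1_nonneg t ht.1.le)]
      exact (hI1_le t ht.1).trans (mul_le_mul_of_nonneg_left ht.2 (sq_nonneg X))
  have hI1_int' : ∀ s r, 0 ≤ s → s ≤ r → IntervalIntegrable I1 volume s r := by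
    intro s r hs hsr
    apply (hI1_int r (hs.trans hsr)).mono_set
    rw [uIcc_of_le hsr, uIcc_of_le (hs.trans hsr)]
    exact Icc_subset_Icc hs le_rfl
  have hKK_cont : ∀ b, 0 ≤ b → ContinuousOn KK (Icc 0 b) := by
    intro b hb
    have := intervalIntegral.continuousOn_primitive_interval
      (f := I1) (μ := volume) (a := 0) (b := b) ?_
    · rw [uIcc_of_le hb] at this; exact this
    · rw [uIcc_of_le hb, integrableOn_Icc_iff_integrableOn_Ioc]
      have h2 := hI1_int b hb
      rwa [intervalIntegrable_iff, uIoc_of_le hb] at h2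
  have hKK_deriv : ∀ t, 0 < t → HasDerivAt KK (I1 t) t := by
    intro t ht
    exact intervalIntegral.integral_hasDerivAt_right (hI1_int t ht.le)
      (hI1_cont.stronglyMeasurableAtFilter isOpen_Ioi t ht)
      (hI1_cont.continuousAt (Ioi_mem_nhds ht))
  have hKK_nonneg : ∀ r, 0 ≤ r → 0 ≤ KK r := by
    intro r hr
    exact intervalIntegral.integral_nonneg hr (fun t ht => hI1_nonneg t ht.1)
  have hKK_mono : ∀ s r, 0 ≤ s → s ≤ r → KK s ≤ KK r := by
    intro s r hs hsr
    have hadd := intervalIntegral.integral_add_adjacent_intervals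
      (hI1_int s hs) (hI1_int' s r hs hsr)
    have hnn : 0 ≤ ∫ t in s..r, I1 t :=
      intervalIntegral.integral_nonneg hsr (fun t ht => hI1_nonneg t (le_trans hs ht.1))
    have : KK s + ∫ t in s..r, I1 t = KK r := hadd
    linarith
  have hKK_le1 : ∀ r, 0 ≤ r → r ≤ 1 → KK r ≤ X^2 / 2 := by
    intro r hr hr1
    calc KK r ≤ ∫ t in (0:ℝ)..r, X^2 * t := by
          apply intervalIntegral.integral_mono_on hr (hI1_int r hr)
            (by apply ContinuousOn.intervalIntegrable; fun_prop)
          intro t ht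
          rcases eq_or_lt_of_le ht.1 with h0 | h0
          · rw [← h0]; simp [hI1def, hqdef]
          · exact hI1_le t h0
      _ = X^2 * (r^2/2) := by
          rw [intervalIntegral.integral_const_mul, integral_id]; ring
      _ ≤ X^2 / 2 := by
          have h2 : r^2 ≤ 1 := by nlinarith
          nlinarith [sq_nonneg X]
  have hKK_le : ∀ r, 0 ≤ r → KK r ≤ 2 := by
    intro r hr
    rcases le_total r 1 with hr1 | hr1
    · have := hKK_le1 r hr hr1
      nlinarith
    · have hsplit := intervalIntegral.integral_add_adjacent_intervals
        (hI1_int 1 zero_le_one) (hI1_int' 1 r zero_le_one hr1)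
      have htail' : (∫ t in (1:ℝ)..r, I1 t) ≤ X^2*c^2*24 := by
        calc (∫ t in (1:ℝ)..r, I1 t) ≤ ∫ t in (1:ℝ)..r, X^2*c^2*((A t)^2/t^3) := by
              apply intervalIntegral.integral_mono_on hr1 (hI1_int' 1 r zero_le_one hr1)
              · apply ContinuousOn.intervalIntegrable
                rw [uIcc_of_le hr1]
                apply ContinuousOn.mul continuousOn_const
                apply ContinuousOn.div
                · exact ((hAcont.mono (fun x hx => le_trans zero_le_one hx.1)).pow 2)
                · fun_prop
                · intro x hx
                  have : (0:ℝ) < x := lt_of_lt_of_le one_pos hx.1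
                  positivity
              · intro t ht
                have ht0 : (0:ℝ) < t := lt_of_lt_of_le one_pos ht.1
                have := hI1_le2 t ht0
                calc I1 t ≤ X^2*c^2*(A t)^2/t^3 := this
                  _ = X^2*c^2*((A t)^2/t^3) := by ring
          _ = X^2*c^2 * ∫ t in (1:ℝ)..r, (A t)^2/t^3 := by
              rw [intervalIntegral.integral_const_mul]
          _ ≤ X^2*c^2*24 := by
              apply mul_le_mul_of_nonneg_left (htail r hr1) (by positivity)
      have h1 : KK 1 ≤ X^2/2 := hKK_le1 1 zero_le_one le_rfl
      have : KK 1 + ∫ t in (1:ℝ)..r, I1 t = KK r := hsplit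
      nlinarith
  -- properties of ff
  have hff_pos : ∀ r, 0 < ff r := fun r => Real.exp_pos _
  have hff_ge1 : ∀ r, 0 ≤ r → 1 ≤ ff r := by
    intro r hr
    rw [hffdef]
    calc (1:ℝ) = Real.exp 0 := Real.exp_zero.symm
      _ ≤ Real.exp (KK r / 2) := Real.exp_le_exp.2 (by linarith [hKK_nonneg r hr])
  have hff_le : ∀ r, 0 ≤ r → ff r ≤ Real.exp 1 := by
    intro r hr
    rw [hffdef]
    exact Real.exp_le_exp.2 (by linarith [hKK_le r hr])
  have hff_cont : ∀ b, 0 ≤ b → ContinuousOn ff (Icc 0 b) := by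
    intro b hb
    exact Real.continuous_exp.comp_continuousOn ((hKK_cont b hb).div_const 2)
  have hff_deriv : ∀ t, 0 < t → HasDerivAt ff (ff t * (I1 t / 2)) t := by
    intro t ht
    exact ((hKK_deriv t ht).div_const 2).exp
  have hff_contIoi : ContinuousOn ff (Ioi 0) := by
    intro t ht
    exact ((hff_deriv t ht).differentiableAt.continuousAt).continuousWithinAt
  -- FF
  have hw_cont : ∀ b, 0 ≤ b → ContinuousOn (fun s : ℝ => (1 - 3*s^2) * ff s) (Icc 0 b) := by
    intro b hb
    exact (by fun_prop : ContinuousOn (fun s : ℝ => 1 - 3*s^2) (Icc 0 b)).mul (hff_cont b hb)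
  have hw_int : ∀ b, 0 ≤ b → IntervalIntegrable (fun s : ℝ => (1 - 3*s^2) * ff s) volume 0 b := by
    intro b hb
    apply ContinuousOn.intervalIntegrable
    rw [uIcc_of_le hb]
    exact hw_cont b hb
  have hw_contIoi : ContinuousOn (fun s : ℝ => (1 - 3*s^2) * ff s) (Ioi 0) :=
    (by fun_prop : ContinuousOn (fun s : ℝ => 1 - 3*s^2) (Ioi 0)).mul hff_contIoi
  have hFF_deriv : ∀ t, 0 < t → HasDerivAt FF ((1 - 3*t^2) * ff t) t := by
    intro t ht
    exact intervalIntegral.integral_hasDerivAt_right (hw_int t ht.le)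
      (hw_contIoi.stronglyMeasurableAtFilter isOpen_Ioi t ht)
      (hw_contIoi.continuousAt (Ioi_mem_nhds ht))
  -- mft and its derivative
  have hmft_eq : ∀ x : ℝ, mft h u x = x⁻¹ * FF x := by
    intro x
    simp only [mft, hffeq, hFFdef, one_div]
  have hmfteq2 : mft h u = fun y => y⁻¹ * FF y := funext hmft_eq
  have hmft_deriv : ∀ x, 0 < x →
      HasDerivAt (mft h u) (-(x^2)⁻¹ * FF x + x⁻¹ * ((1-3*x^2) * ff x)) x := by
    intro x hx
    rw [hmfteq2]
    exact (hasDerivAt_inv hx.ne').mul (hFF_deriv x hx)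
  have hmG_eq : ∀ x, 0 < x →
      mG h u x = (1/2) * (-(x^2)⁻¹ * FF x + x⁻¹ * ((1-3*x^2) * ff x)) := by
    intro x hx
    simp only [mG]
    rw [(hmft_deriv x hx).deriv]
  set ψ : ℝ → ℝ := fun y => (1/2) * (-(y^2)⁻¹ * FF y + y⁻¹ * ((1-3*y^2) * ff y)) with hψdef
  have hψ_deriv : ∀ x, 0 < x → HasDerivAt ψ
      ((1/2) * ( (2*x/(x^2)^2) * FF x - (x^2)⁻¹ * ((1-3*x^2) * ff x)
        - (x^2)⁻¹ * ((1-3*x^2) * ff x)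
        + x⁻¹ * (-(6*x) * ff x + (1-3*x^2) * (ff x * (I1 x / 2))) )) x := by
    intro x hx
    have hx2 : (x:ℝ)^2 ≠ 0 := pow_ne_zero 2 hx.ne'
    have d1 : HasDerivAt (fun y : ℝ => -(y^2)⁻¹ * FF y)
        ((2*x/(x^2)^2) * FF x + (-(x^2)⁻¹) * ((1-3*x^2) * ff x)) x := by
      have hin : HasDerivAt (fun y : ℝ => -(y^2)⁻¹) (2*x/(x^2)^2) x := by
        have := ((hasDerivAt_pow 2 x).inv hx2).neg
        convert this using 1
        · rfl
        · rfl
        · rfl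
        all_goals (push_cast; field_simp)
      exact hin.mul (hFF_deriv x hx)
    have d2 : HasDerivAt (fun y : ℝ => y⁻¹ * ((1-3*y^2) * ff y))
        ((-(x^2)⁻¹) * ((1-3*x^2) * ff x)
          + x⁻¹ * (-(6*x) * ff x + (1-3*x^2) * (ff x * (I1 x / 2)))) x := by
      have hpoly : HasDerivAt (fun y : ℝ => 1 - 3*y^2) (-(6*x)) x := by
        have := ((hasDerivAt_pow 2 x).const_mul 3).const_sub 1
        convert this using 1
        · rfl
        · rfl
        all_goals (push_cast; ring)
      have hg : HasDerivAt (fun y : ℝ => (1-3*y^2) * ff y)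
          (-(6*x) * ff x + (1-3*x^2) * (ff x * (I1 x / 2))) x :=
        hpoly.mul (hff_deriv x hx)
      have hin : HasDerivAt (fun y : ℝ => y⁻¹) (-(x^2)⁻¹) x := hasDerivAt_inv hx.ne'
      have := hin.mul hg
      convert this using 1
      · rfl
      · rfl
      · rfl
      all_goals ring
    have := (d1.add d2).const_mul (1/2)
    convert this using 1
    · rfl
    · rfl
    · rfl
    all_goals ring
  have hderiv_mG : ∀ x, 0 < x → deriv (mG h u) x
      = (1/2) * ( (2*x/(x^2)^2) * FF x - (x^2)⁻¹ * ((1-3*x^2) * ff x)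
        - (x^2)⁻¹ * ((1-3*x^2) * ff x)
        + x⁻¹ * (-(6*x) * ff x + (1-3*x^2) * (ff x * (I1 x / 2))) ) := by
    intro x hx
    have hev : mG h u =ᶠ[𝓝 x] ψ := by
      filter_upwards [Ioi_mem_nhds hx] with y hy
      rw [hmG_eq y hy, hψdef]
    rw [hev.deriv_eq, (hψ_deriv x hx).deriv]
  have hmJ_id : ∀ x, 0 < x → mJ h u x = -(3/(2*x^2)) * (FF x + (x^3 - x) * ff x)
      - (1-3*x^2) * ff x * (q x)^2 / (4*x) := by
    intro x hx
    have hI1x : I1 x = q x ^ 2 / x := rfl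
    simp only [mJ]
    rw [hmG_eq x hx, hderiv_mG x hx, hI1x]
    field_simp
    ring
  -- value at r = 0
  have hmJ0 : mJ h u 0 = 0 := by
    have hmft0 : mft h u 0 = 0 := by
      rw [hmft_eq 0]
      simp
    have hKK0 : KK 0 = 0 := intervalIntegral.integral_same
    have hff0 : ff 0 = 1 := by rw [hffdef]; simp [hKK0]
    have hw0 : ((1:ℝ) - 3*(0:ℝ)^2) * ff 0 = 1 := by rw [hff0]; ring
    have hwc : ContinuousWithinAt (fun s : ℝ => (1-3*s^2) * ff s) (Icc (0:ℝ) 1) 0 :=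
      (hw_cont 1 zero_le_one) 0 (left_mem_Icc.2 zero_le_one)
    have htend : Tendsto (mft h u) (𝓝[Ioo (0:ℝ) 1] 0) (𝓝 1) := by
      rw [Metric.tendsto_nhdsWithin_nhds]
      intro ε hε
      rw [Metric.continuousWithinAt_iff] at hwc
      obtain ⟨d, hd, hball⟩ := hwc (ε/2) (by linarith)
      refine ⟨min d 1, by positivity, ?_⟩
      intro x hx hxd
      have hx0 : 0 < x := hx.1
      have hx1 : x < 1 := hx.2
      have hxd' : x < d := by
        rw [Real.dist_eq, sub_zero, abs_of_pos hx0] at hxd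
        exact lt_of_lt_of_le hxd (min_le_left _ _)
      have hbound : ∀ s ∈ Icc (0:ℝ) x, |(1-3*s^2) * ff s - 1| ≤ ε/2 := by
        intro s hs
        have hs1 : s ∈ Icc (0:ℝ) 1 := ⟨hs.1, le_trans hs.2 (le_of_lt hx1)⟩
        have hds : dist s 0 < d := by
          rw [Real.dist_eq, sub_zero, abs_of_nonneg hs.1]
          exact lt_of_le_of_lt hs.2 hxd'
        have hb := hball hs1 hds
        rw [Real.dist_eq] at hb
        have : (1-3*s^2) * ff s - 1 = (1-3*s^2) * ff s - (1-3*(0:ℝ)^2) * ff 0 := by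
          rw [hw0]
        rw [this]
        exact le_of_lt hb
      have hrepr : mft h u x - 1 = x⁻¹ * ∫ s in (0:ℝ)..x, ((1-3*s^2) * ff s - 1) := by
        rw [hmft_eq x, intervalIntegral.integral_sub (hw_int x hx0.le) intervalIntegrable_const,
          intervalIntegral.integral_const]
        field_simp
        simp [hFFdef]
      rw [Real.dist_eq, hrepr]
      have hint1 : IntervalIntegrable (fun s : ℝ => (1-3*s^2) * ff s - 1) volume 0 x :=
        (hw_int x hx0.le).sub intervalIntegrable_const
      calc |x⁻¹ * ∫ s in (0:ℝ)..x, ((1-3*s^2) * ff s - 1)|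
          = x⁻¹ * |∫ s in (0:ℝ)..x, ((1-3*s^2) * ff s - 1)| := by
            rw [abs_mul, abs_of_pos (inv_pos.2 hx0)]
        _ ≤ x⁻¹ * (x * (ε/2)) := by
            apply mul_le_mul_of_nonneg_left _ (inv_pos.2 hx0).le
            calc |∫ s in (0:ℝ)..x, ((1-3*s^2) * ff s - 1)|
                ≤ ∫ s in (0:ℝ)..x, |(1-3*s^2) * ff s - 1| :=
                  intervalIntegral.abs_integral_le_integral_abs hx0.le
              _ ≤ ∫ _s in (0:ℝ)..x, (ε/2) := by
                  apply intervalIntegral.integral_mono_on hx0.le hint1.abs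
                    intervalIntegrable_const hbound
              _ = x * (ε/2) := by rw [intervalIntegral.integral_const, smul_eq_mul, sub_zero]
        _ = ε/2 := by field_simp
        _ < ε := by linarith
    have hne : (𝓝[Ioo (0:ℝ) 1] (0:ℝ)).NeBot := by
      rw [← mem_closure_iff_nhdsWithin_neBot, closure_Ioo one_ne_zero.symm]
      exact ⟨le_rfl, zero_le_one⟩
    have hnd : ¬ DifferentiableAt ℝ (mft h u) 0 := by
      intro hdiff
      have h2 : Tendsto (mft h u) (𝓝[Ioo (0:ℝ) 1] 0) (𝓝 (mft h u 0)) :=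
        hdiff.continuousAt.continuousWithinAt
      rw [hmft0] at h2
      have := tendsto_nhds_unique htend h2
      norm_num at this
    simp only [mJ, mG]
    rw [deriv_zero_of_not_differentiableAt hnd]
    simp
  -- the E bound
  have hE : ∀ r, 0 < r → |FF r + (r^3 - r) * ff r|
      ≤ (Real.exp 1 / 2) * ∫ t in (0:ℝ)..r, (t + t^3) * I1 t := by
    intro r hr
    have hffr_int : IntervalIntegrable (fun s : ℝ => (1-3*s^2) * ff r) volume 0 r := by
      apply ContinuousOn.intervalIntegrable
      fun_prop
    have hpoly1 : ∫ s in (0:ℝ)..r, (1-3*s^2) = r - r^3 := by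
      rw [intervalIntegral.integral_sub intervalIntegrable_const
        (by apply Continuous.intervalIntegrable; fun_prop),
        intervalIntegral.integral_const, smul_eq_mul, intervalIntegral.integral_const_mul,
        integral_pow]
      push_cast
      ring
    have hid : FF r + (r^3 - r) * ff r = ∫ s in (0:ℝ)..r, ((1-3*s^2) * (ff s - ff r)) := by
      have hsub : ∫ s in (0:ℝ)..r, ((1-3*s^2) * (ff s - ff r))
          = FF r - ∫ s in (0:ℝ)..r, ((1-3*s^2) * ff r) := by
        rw [← intervalIntegral.integral_sub (hw_int r hr.le) hffr_int]
        congr 1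
        funext s
        ring
      have hval : ∫ s in (0:ℝ)..r, ((1-3*s^2) * ff r) = (r - r^3) * ff r := by
        rw [intervalIntegral.integral_mul_const, hpoly1]
      rw [hsub, hval]
      ring
    rw [hid]
    have hKKi : IntervalIntegrable (fun s : ℝ => (1+3*s^2) * KK s) volume 0 r := by
      apply ContinuousOn.intervalIntegrable
      rw [uIcc_of_le hr.le]
      exact (by fun_prop : ContinuousOn (fun s : ℝ => 1+3*s^2) (Icc 0 r)).mul (hKK_cont r hr.le)
    have hKKc2 : IntervalIntegrable (fun s : ℝ => (1+3*s^2) * KK r) volume 0 r := by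
      apply ContinuousOn.intervalIntegrable
      fun_prop
    calc |∫ s in (0:ℝ)..r, ((1-3*s^2) * (ff s - ff r))|
        ≤ ∫ s in (0:ℝ)..r, |(1-3*s^2) * (ff s - ff r)| :=
          intervalIntegral.abs_integral_le_integral_abs hr.le
      _ ≤ ∫ s in (0:ℝ)..r, (Real.exp 1/2) * ((1+3*s^2) * (KK r - KK s)) := by
          apply intervalIntegral.integral_mono_on hr.le
          · apply IntervalIntegrable.abs
            apply ContinuousOn.intervalIntegrable
            rw [uIcc_of_le hr.le]
            exact (by fun_prop : ContinuousOn (fun s : ℝ => 1-3*s^2) (Icc 0 r)).mul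
              ((hff_cont r hr.le).sub continuousOn_const)
          · apply ContinuousOn.intervalIntegrable
            rw [uIcc_of_le hr.le]
            exact continuousOn_const.mul
              ((by fun_prop : ContinuousOn (fun s : ℝ => 1+3*s^2) (Icc 0 r)).mul
                (continuousOn_const.sub (hKK_cont r hr.le)))
          · intro s hs
            have h1 : |1-3*s^2| ≤ 1+3*s^2 := by
              rw [abs_le]
              constructor <;> nlinarith [sq_nonneg s]
            have hKKm := hKK_mono s r hs.1 hs.2
            have hffle : ff s ≤ ff r := by
              rw [hffdef]
              exact Real.exp_le_exp.2 (by linarith)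
            have hexp : ff r - ff s ≤ (Real.exp 1/2) * (KK r - KK s) := by
              have ha := Real.add_one_le_exp ((KK s - KK r)/2)
              have hsplit : Real.exp (KK s / 2)
                  = Real.exp (KK r / 2) * Real.exp ((KK s - KK r)/2) := by
                rw [← Real.exp_add]
                congr 1
                ring
              have hffrle : Real.exp (KK r / 2) ≤ Real.exp 1 :=
                Real.exp_le_exp.2 (by linarith [hKK_le r hr.le])
              have hposr := Real.exp_pos (KK r / 2)
              rw [hffdef]
              simp only
              nlinarith
            calc |(1-3*s^2) * (ff s - ff r)| = |1-3*s^2| * |ff s - ff r| := abs_mul _ _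
              _ = |1-3*s^2| * (ff r - ff s) := by
                  rw [abs_sub_comm (ff s) (ff r),
                    abs_of_nonneg (by linarith : (0:ℝ) ≤ ff r - ff s)]
              _ ≤ (1+3*s^2) * (ff r - ff s) :=
                  mul_le_mul_of_nonneg_right h1 (by linarith)
              _ ≤ (1+3*s^2) * ((Real.exp 1/2) * (KK r - KK s)) :=
                  mul_le_mul_of_nonneg_left hexp (by positivity)
              _ = (Real.exp 1/2) * ((1+3*s^2) * (KK r - KK s)) := by ring
      _ = (Real.exp 1/2) * ∫ s in (0:ℝ)..r, ((1+3*s^2) * (KK r - KK s)) :=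
          intervalIntegral.integral_const_mul _ _
      _ = (Real.exp 1 / 2) * ∫ t in (0:ℝ)..r, (t + t^3) * I1 t := by
          congr 1
          have hpoly2 : ∫ s in (0:ℝ)..r, (1+3*s^2) = r + r^3 := by
            rw [intervalIntegral.integral_add intervalIntegrable_const
              (by apply Continuous.intervalIntegrable; fun_prop),
              intervalIntegral.integral_const, smul_eq_mul, intervalIntegral.integral_const_mul,
              integral_pow]
            push_cast
            ring
          have hexpand : ∫ s in (0:ℝ)..r, ((1+3*s^2) * (KK r - KK s))
              = (r + r^3) * KK r - ∫ s in (0:ℝ)..r, ((1+3*s^2) * KK s) := by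
            rw [show (fun s : ℝ => (1+3*s^2) * (KK r - KK s))
                = fun s : ℝ => (1+3*s^2) * KK r - (1+3*s^2) * KK s from funext fun s => by ring]
            rw [intervalIntegral.integral_sub hKKc2 hKKi,
              intervalIntegral.integral_mul_const, hpoly2]
          rw [hexpand]
          exact Zid I1 r hr hI1_cont hI1_int
  -- bounds on T = ∫ (t+t³) I1
  have hTg_int : ∀ b, 0 ≤ b → IntervalIntegrable (fun t : ℝ => (t + t^3) * I1 t) volume 0 b := by
    intro b hb
    apply IntervalIntegrable.continuousOn_mul (hI1_int b hb)
    rw [uIcc_of_le hb]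
    fun_prop
  have hTg_int' : ∀ a b : ℝ, 0 ≤ a → a ≤ b →
      IntervalIntegrable (fun t : ℝ => (t + t^3) * I1 t) volume a b := by
    intro a b ha hab
    apply (hTg_int b (ha.trans hab)).mono_set
    rw [uIcc_of_le hab, uIcc_of_le (ha.trans hab)]
    exact Icc_subset_Icc ha le_rfl
  have hT1 : ∀ r, 0 < r → r ≤ 1 →
      (∫ t in (0:ℝ)..r, (t + t^3) * I1 t) ≤ 2*X^2*r^3/3 := by
    intro r hr hr1
    calc ∫ t in (0:ℝ)..r, (t + t^3) * I1 t ≤ ∫ t in (0:ℝ)..r, 2*X^2*t^2 := by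
          apply intervalIntegral.integral_mono_on hr.le (hTg_int r hr.le)
            (by apply Continuous.intervalIntegrable; fun_prop)
          intro t ht
          rcases eq_or_lt_of_le ht.1 with h0 | h0
          · rw [← h0]
            norm_num
          · have hI := hI1_le t h0
            have hInn := hI1_nonneg t ht.1
            have ht1 : t ≤ 1 := le_trans ht.2 hr1
            have ht3 : t^3 ≤ t := by nlinarith [mul_nonneg (mul_nonneg h0.le (sub_nonneg.2 ht1)) (by linarith : (0:ℝ) ≤ 1+t)]
            calc (t + t^3) * I1 t ≤ 2*t * I1 t := by
                  nlinarith [mul_nonneg (sub_nonneg.2 ht3) hInn]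
              _ ≤ 2*t * (X^2 * t) :=
                  mul_le_mul_of_nonneg_left hI (by positivity)
              _ = 2*X^2*t^2 := by ring
      _ = 2*X^2*r^3/3 := by
          rw [intervalIntegral.integral_const_mul, integral_pow]
          push_cast
          ring
  have hT2 : ∀ r, 1 ≤ r →
      (∫ t in (0:ℝ)..r, (t + t^3) * I1 t) ≤ 2*X^2*c^2*(1/3 + W r) := by
    intro r hr1
    have hsplit := intervalIntegral.integral_add_adjacent_intervals
      (hTg_int 1 zero_le_one) (hTg_int' 1 r zero_le_one hr1)
    have h01 : (∫ t in (0:ℝ)..1, (t + t^3) * I1 t) ≤ 2*X^2/3 := by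
      have := hT1 1 one_pos le_rfl
      simpa using this
    have h1r : (∫ t in (1:ℝ)..r, (t + t^3) * I1 t) ≤ 2*X^2*c^2 * W r := by
      calc ∫ t in (1:ℝ)..r, (t + t^3) * I1 t
          ≤ ∫ t in (1:ℝ)..r, 2*X^2*c^2*(A t)^2 := by
            apply intervalIntegral.integral_mono_on hr1 (hTg_int' 1 r zero_le_one hr1)
            · apply ContinuousOn.intervalIntegrable
              rw [uIcc_of_le hr1]
              exact continuousOn_const.mul
                ((hAcont.mono (fun x hx => le_trans zero_le_one hx.1)).pow 2)
            · intro t ht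
              have ht0 : (0:ℝ) < t := lt_of_lt_of_le one_pos ht.1
              have hI2 := hI1_le2 t ht0
              have hInn := hI1_nonneg t ht0.le
              have ht3 : (0:ℝ) < t^3 := by positivity
              have heq3 : 2*t^3 * (X^2*c^2*(A t)^2/t^3) = 2*X^2*c^2*(A t)^2 := by
                field_simp
              have htt : t ≤ t^3 := by nlinarith [mul_nonneg (mul_nonneg ht0.le (sub_nonneg.2 ht.1)) (by linarith : (0:ℝ) ≤ t+1)]
              calc (t + t^3) * I1 t ≤ 2*t^3 * I1 t := by
                    nlinarith [mul_nonneg (sub_nonneg.2 htt) hInn]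
                _ ≤ 2*t^3 * (X^2*c^2*(A t)^2/t^3) :=
                    mul_le_mul_of_nonneg_left hI2 (by positivity)
                _ = 2*X^2*c^2*(A t)^2 := heq3
        _ = 2*X^2*c^2 * ∫ t in (1:ℝ)..r, (A t)^2 := by
            rw [← intervalIntegral.integral_const_mul]
        _ ≤ 2*X^2*c^2 * W r :=
            mul_le_mul_of_nonneg_left (htail2 r hr1) (by positivity)
    have hc2 : (1:ℝ) ≤ c^2 := by nlinarith
    have hX2c : X^2 ≤ X^2 * c^2 := by nlinarith [sq_nonneg X]
    linarith [hsplit, h01, h1r]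
  -- final assembly
  have hee : (0:ℝ) < Real.exp 1 := Real.exp_pos 1
  have hc2 : (1:ℝ) ≤ c^2 := by nlinarith
  refine ⟨hmJ0, ?_, ?_⟩
  · intro r hr hr1
    have hEb : |FF r + (r^3 - r) * ff r| ≤ (Real.exp 1/2) * (2*X^2*r^3/3) :=
      (hE r hr).trans (mul_le_mul_of_nonneg_left (hT1 r hr hr1) (by positivity))
    have hq2r : q r ^ 2 ≤ X^2 * r^2 := hq1' r hr
    have hffr : ff r ≤ Real.exp 1 := hff_le r hr.le
    have hffrp : 0 < ff r := hff_pos r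
    rw [hmJ_id r hr]
    have t1 : (3/(2*r^2)) * |FF r + (r^3 - r) * ff r| ≤ Real.exp 1 * X^2 * r / 2 := by
      have heq : (3/(2*r^2)) * ((Real.exp 1/2) * (2*X^2*r^3/3)) = Real.exp 1 * X^2 * r / 2 := by
        field_simp
      calc (3/(2*r^2)) * |FF r + (r^3 - r) * ff r|
          ≤ (3/(2*r^2)) * ((Real.exp 1/2) * (2*X^2*r^3/3)) :=
            mul_le_mul_of_nonneg_left hEb (by positivity)
        _ = Real.exp 1 * X^2 * r / 2 := heq
    have t2 : |1-3*r^2| * ff r * (q r)^2 / (4*r) ≤ Real.exp 1 * X^2 * r := by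
      have habs4 : |1-3*r^2| ≤ 4 := by
        rw [abs_le]
        constructor <;> nlinarith
      have b1 : |1-3*r^2| * ff r ≤ 4 * Real.exp 1 :=
        mul_le_mul habs4 hffr hffrp.le (by norm_num)
      have b2 : |1-3*r^2| * ff r * (q r)^2 ≤ (4 * Real.exp 1) * (X^2*r^2) :=
        mul_le_mul b1 hq2r (sq_nonneg _) (by positivity)
      rw [div_le_iff₀ (by positivity)]
      nlinarith [b2]
    calc |(-(3/(2*r^2)) * (FF r + (r^3 - r) * ff r)) - (1-3*r^2) * ff r * (q r)^2 / (4*r)|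
        ≤ |(-(3/(2*r^2))) * (FF r + (r^3 - r) * ff r)|
            + |(1-3*r^2) * ff r * (q r)^2 / (4*r)| := abs_sub _ _
      _ = (3/(2*r^2)) * |FF r + (r^3 - r) * ff r|
            + |1-3*r^2| * ff r * (q r)^2 / (4*r) := by
          rw [abs_mul, abs_neg, abs_of_pos (show (0:ℝ) < 3/(2*r^2) by positivity)]
          congr 1
          rw [abs_div, abs_of_pos (show (0:ℝ) < 4*r by positivity), abs_mul, abs_mul,
            abs_of_pos hffrp, abs_of_nonneg (sq_nonneg (q r))]
      _ ≤ Real.exp 1 * X^2 * r / 2 + Real.exp 1 * X^2 * r := add_le_add t1 t2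
      _ ≤ 2 * Real.exp 1 * c^2 * X^2 * r := by
          nlinarith [mul_nonneg (mul_nonneg hee.le (sq_nonneg X)) hr.le,
            mul_nonneg (mul_nonneg (sub_nonneg.2 hc2) (mul_nonneg hee.le (sq_nonneg X))) hr.le]
  · intro r hr1
    have hr : (0:ℝ) < r := lt_of_lt_of_le one_pos hr1
    have hEb : |FF r + (r^3 - r) * ff r| ≤ (Real.exp 1/2) * (2*X^2*c^2*(1/3 + W r)) :=
      (hE r hr).trans (mul_le_mul_of_nonneg_left (hT2 r hr1) (by positivity))
    have hq2r : q r ^ 2 ≤ X^2*c^2*(A r)^2/r^2 := hq2' r hr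
    have hffr : ff r ≤ Real.exp 1 := hff_le r hr.le
    have hffrp : 0 < ff r := hff_pos r
    rw [hmJ_id r hr]
    have t1 : (3/(2*r^2)) * |FF r + (r^3 - r) * ff r|
        ≤ Real.exp 1 * c^2 * X^2 * ((3/(2*r^2)) * (1/3 + W r)) := by
      have heq : (3/(2*r^2)) * ((Real.exp 1/2) * (2*X^2*c^2*(1/3 + W r)))
          = Real.exp 1 * c^2 * X^2 * ((3/(2*r^2)) * (1/3 + W r)) := by
        field_simp
      calc (3/(2*r^2)) * |FF r + (r^3 - r) * ff r|
          ≤ (3/(2*r^2)) * ((Real.exp 1/2) * (2*X^2*c^2*(1/3 + W r))) :=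
            mul_le_mul_of_nonneg_left hEb (by positivity)
        _ = Real.exp 1 * c^2 * X^2 * ((3/(2*r^2)) * (1/3 + W r)) := heq
    have t2 : |1-3*r^2| * ff r * (q r)^2 / (4*r)
        ≤ Real.exp 1 * c^2 * X^2 * ((A r)^2 / r) := by
      have habs4 : |1-3*r^2| ≤ 4*r^2 := by
        rw [abs_le]
        constructor <;> nlinarith
      have b1 : |1-3*r^2| * ff r ≤ (4*r^2) * Real.exp 1 :=
        mul_le_mul habs4 hffr hffrp.le (by positivity)
      have b2 : |1-3*r^2| * ff r * (q r)^2 ≤ ((4*r^2) * Real.exp 1) * (X^2*c^2*(A r)^2/r^2) :=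
        mul_le_mul b1 hq2r (sq_nonneg _) (by positivity)
      have heq2 : ((4*r^2) * Real.exp 1) * (X^2*c^2*(A r)^2/r^2)
          = (Real.exp 1 * c^2 * X^2 * ((A r)^2 / r)) * (4*r) := by
        field_simp
      rw [div_le_iff₀ (by positivity)]
      rw [heq2] at b2
      exact b2
    calc |(-(3/(2*r^2)) * (FF r + (r^3 - r) * ff r)) - (1-3*r^2) * ff r * (q r)^2 / (4*r)|
        ≤ |(-(3/(2*r^2))) * (FF r + (r^3 - r) * ff r)|
            + |(1-3*r^2) * ff r * (q r)^2 / (4*r)| := abs_sub _ _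
      _ = (3/(2*r^2)) * |FF r + (r^3 - r) * ff r|
            + |1-3*r^2| * ff r * (q r)^2 / (4*r) := by
          rw [abs_mul, abs_neg, abs_of_pos (show (0:ℝ) < 3/(2*r^2) by positivity)]
          congr 1
          rw [abs_div, abs_of_pos (show (0:ℝ) < 4*r by positivity), abs_mul, abs_mul,
            abs_of_pos hffrp, abs_of_nonneg (sq_nonneg (q r))]
      _ ≤ Real.exp 1 * c^2 * X^2 * ((3/(2*r^2)) * (1/3 + W r))
            + Real.exp 1 * c^2 * X^2 * ((A r)^2 / r) := add_le_add t1 t2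
      _ = Real.exp 1 * c^2 * X^2 * ((3/(2*r^2)) * (1/3 + W r) + (A r)^2 / r) := by ring

set_option maxHeartbeats 4000000 in
/-- estimate for J. -/
theorem J_estimate (δ : ℝ) (hδ₁ : -1 ≤ δ) (hδ₂ : δ < 1/2) :
    ∃ γ > (0:ℝ), ∃ C > (0:ℝ),
      ∀ (U : ℝ) (h : ℝ → ℝ → ℝ),
        ContinuousOn (Function.uncurry h) (Set.Icc (0:ℝ) U ×ˢ Set.Ici (0:ℝ)) →
        (∀ u ∈ Set.Icc (0:ℝ) U, ContDiffOn ℝ 1 (h u) (Set.Ici 0)) →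
        ∀ X : ℝ,
          (∀ u ∈ Set.Icc (0:ℝ) U, ∀ r ≥ (0:ℝ),
            (1 + r) ^ (2 - δ) * |deriv (h u) r| ≤ X) →
          X < γ →
          ∀ u ∈ Set.Icc (0:ℝ) U, ∀ r ≥ (0:ℝ),
            |mJ h u r| ≤
              C * (Real.log (Real.exp 1 + r) ^ (2 * chi δ + 1 - Hjump δ) /
                (1 + r) ^ (1 - 2 * deltaPlus δ)) * X ^ 2 := by
  have hee : (0:ℝ) < Real.exp 1 := Real.exp_pos 1
  have he1 : (1:ℝ) ≤ Real.exp 1 := by nlinarith [Real.add_one_le_exp 1]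
  rcases lt_trichotomy δ 0 with hneg | hzero | hpos
  · -- case δ < 0
    set c : ℝ := 1/(-δ) with hcdef
    have hmδ : (0:ℝ) < -δ := by linarith
    have hδne : δ ≠ 0 := by linarith
    have hc0 : (0:ℝ) < c := by positivity
    have hc1 : (1:ℝ) ≤ c := by
      rw [hcdef, le_div_iff₀ hmδ]
      linarith
    refine ⟨1/(5*c), by positivity, 100 * Real.exp 1 * c^2, by positivity, ?_⟩
    intro U h hcontU hC1 X hXb hXγ u hu r hr
    have hcd := hC1 u hu
    have hcont : ContinuousOn (h u) (Ici 0) := hcd.continuousOn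
    have hX0 : 0 ≤ X := le_trans (by positivity) (hXb u hu 0 le_rfl)
    have hXc5 : X * c ≤ 1/5 := by
      have := mul_lt_mul_of_pos_right hXγ hc0
      have e1 : 1/(5*c) * c = 1/5 := by field_simp
      linarith
    have hd : ∀ t, 0 ≤ t → |deriv (h u) t| ≤ X * (1+t) ^ (δ-2) := by
      intro t ht
      have hb := hXb u hu t ht
      have hy : (0:ℝ) < (1+t) ^ (2-δ) := Real.rpow_pos_of_pos (by linarith) _
      rw [show δ-2 = -(2-δ) by ring, Real.rpow_neg (by linarith : (0:ℝ) ≤ 1+t),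
        ← div_eq_mul_inv, le_div_iff₀ hy, mul_comm]
      exact hb
    have hqb := qbound h u X δ (by linarith) hcd hd hX0
    have hq1 : ∀ t, 0 < t → |h u t - bar h u t| ≤ X * t := fun t ht => (hqb t ht).1
    have hq2 : ∀ t, 0 < t → |h u t - bar h u t| ≤ X * c * (fun _ : ℝ => (1:ℝ)) t / t := by
      intro t ht
      have h2 := (hqb t ht).2
      have hP : ∫ s in (0:ℝ)..t, (1+s) ^ (δ-1) ≤ 1/(-δ) := by
        rw [integral_rpow_shift (by intro hh; apply hδne; linarith) le_rfl ht.le,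
          show δ-1+1 = δ by ring]
        have hy0 : (0:ℝ) < (1+t) ^ δ := Real.rpow_pos_of_pos (by linarith) _
        have e0 : (1+(0:ℝ)) ^ δ = 1 := by norm_num
        rw [e0, div_le_iff_of_neg hneg]
        have e1 : 1/(-δ) * δ = -1 := by field_simp
        rw [e1]
        linarith
      have hnn : (0:ℝ) ≤ X / ((1-δ)*t) :=
        div_nonneg hX0 (mul_nonneg (by linarith) ht.le)
      calc |h u t - bar h u t| ≤ X / ((1-δ)*t) * ∫ s in (0:ℝ)..t, (1+s) ^ (δ-1) := h2
        _ ≤ X / ((1-δ)*t) * (1/(-δ)) := mul_le_mul_of_nonneg_left hP hnn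
        _ = X / ((1-δ)*t*(-δ)) := by rw [div_mul_div_comm, mul_one]
        _ ≤ X / (t*(-δ)) := by
            apply div_le_div_of_nonneg_left hX0 (mul_pos ht hmδ)
            nlinarith [mul_nonneg (mul_nonneg ht.le hmδ.le) hmδ.le]
        _ = X * c * (fun _ : ℝ => (1:ℝ)) t / t := by
            simp only
            rw [hcdef]
            field_simp
            try ring
            try exact Or.inl trivial
    have htailA : ∀ ρ, 1 ≤ ρ → (∫ t in (1:ℝ)..ρ, ((fun _ : ℝ => (1:ℝ)) t)^2/t^3) ≤ 24 := by
      intro ρ hρ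
      have e1 : (fun t : ℝ => ((fun _ : ℝ => (1:ℝ)) t)^2/t^3) = fun t : ℝ => 1/t^3 := by
        funext t
        norm_num
      rw [e1]
      linarith [int_inv_cube hρ]
    have htail2A : ∀ ρ, 1 ≤ ρ → (∫ t in (1:ℝ)..ρ, ((fun _ : ℝ => (1:ℝ)) t)^2) ≤ ρ := by
      intro ρ hρ
      have e1 : (fun t : ℝ => ((fun _ : ℝ => (1:ℝ)) t)^2) = fun _ : ℝ => (1:ℝ) := by
        funext t
        norm_num
      rw [e1, intervalIntegral.integral_const, smul_eq_mul, mul_one]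
      linarith
    obtain ⟨hJ0, hJs, hJl⟩ := core h u X c (fun _ => (1:ℝ)) (fun ρ => ρ) hcont hX0 hc1 hXc5
      continuousOn_const hq1 hq2 htailA htail2A
    -- rewrite goal constants
    have hχ : chi δ = 0 := if_neg hδne
    have hH : Hjump δ = 0 := if_neg (by linarith)
    have hdp : deltaPlus δ = 0 := max_eq_right hneg.le
    rw [hχ, hH, hdp, show 2*(0:ℝ)+1-0 = 1 by norm_num, show (1:ℝ)-2*0 = 1 by norm_num,
      Real.rpow_one, Real.rpow_one]
    have hlog1 : 1 ≤ Real.log (Real.exp 1 + r) := by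
      have hl := Real.log_le_log (Real.exp_pos 1) (by linarith : Real.exp 1 ≤ Real.exp 1 + r)
      rwa [Real.log_exp] at hl
    have hL0 : (0:ℝ) ≤ Real.log (Real.exp 1 + r) / (1+r) := by
      apply div_nonneg (by linarith) (by linarith)
    set L : ℝ := Real.log (Real.exp 1 + r) / (1+r) with hLdef
    rcases eq_or_lt_of_le hr with h0 | h0
    · rw [← h0, hJ0, abs_zero]
      have : (0:ℝ) ≤ 100 * Real.exp 1 * c^2 * L * X^2 := by
        apply mul_nonneg (mul_nonneg (by positivity) hL0) (sq_nonneg X)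
      linarith [this]
    rcases le_total r 1 with hr1 | hr1
    · have hb := hJs r h0 hr1
      have hL2 : 1/2 ≤ L := by
        rw [hLdef, le_div_iff₀ (by linarith : (0:ℝ) < 1+r)]
        nlinarith
      have hP1 : (0:ℝ) ≤ Real.exp 1 * c^2 * X^2 :=
        mul_nonneg (mul_nonneg hee.le (sq_nonneg c)) (sq_nonneg X)
      calc |mJ h u r| ≤ 2 * Real.exp 1 * c^2 * X^2 * r := hb
        _ ≤ 100 * Real.exp 1 * c^2 * L * X^2 := by nlinarith [hP1, hL2, hr1, hL0]
    · have hb := hJl r hr1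
      have hr0 : (0:ℝ) < r := lt_of_lt_of_le one_pos hr1
      have hQ : (3/(2*r^2)) * (1/3 + r) + ((fun _ : ℝ => (1:ℝ)) r)^2 / r ≤ 6 * L := by
        simp only [one_pow]
        have e1 : (3/(2*r^2)) * (1/3 + r) + 1 / r = (1+5*r)/(2*r^2) := by
          field_simp
          ring
        rw [e1]
        have e2 : (1+5*r)/(2*r^2) ≤ 6/(1+r) := by
          rw [div_le_div_iff₀ (by positivity) (by positivity)]
          nlinarith [mul_nonneg (by linarith : (0:ℝ) ≤ 7*r+1) (by linarith : (0:ℝ) ≤ r-1)]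
        have e3 : 6/(1+r) ≤ 6 * L := by
          rw [hLdef, ← mul_div_assoc, div_le_div_iff_of_pos_right (by linarith : (0:ℝ) < 1+r)]
          linarith
        linarith
      have hP1 : (0:ℝ) ≤ Real.exp 1 * c^2 * X^2 :=
        mul_nonneg (mul_nonneg hee.le (sq_nonneg c)) (sq_nonneg X)
      calc |mJ h u r| ≤ Real.exp 1 * c^2 * X^2 * ((3/(2*r^2)) * (1/3 + r)
            + ((fun _ : ℝ => (1:ℝ)) r)^2 / r) := hb
        _ ≤ Real.exp 1 * c^2 * X^2 * (6 * L) := mul_le_mul_of_nonneg_left hQ hP1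
        _ ≤ 100 * Real.exp 1 * c^2 * L * X^2 := by nlinarith [hP1, hL0]
  · -- case δ = 0
    subst hzero
    refine ⟨1/5, by norm_num, 100 * Real.exp 1, by positivity, ?_⟩
    intro U h hcontU hC1 X hXb hXγ u hu r hr
    have hcd := hC1 u hu
    have hcont : ContinuousOn (h u) (Ici 0) := hcd.continuousOn
    have hX0 : 0 ≤ X := le_trans (by positivity) (hXb u hu 0 le_rfl)
    have hXc5 : X * 1 ≤ 1/5 := by rw [mul_one]; linarith
    have hd : ∀ t, 0 ≤ t → |deriv (h u) t| ≤ X * (1+t) ^ ((0:ℝ)-2) := by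
      intro t ht
      have hb := hXb u hu t ht
      have hy : (0:ℝ) < (1+t) ^ (2-(0:ℝ)) := Real.rpow_pos_of_pos (by linarith) _
      rw [show (0:ℝ)-2 = -(2-(0:ℝ)) by ring, Real.rpow_neg (by linarith : (0:ℝ) ≤ 1+t),
        ← div_eq_mul_inv, le_div_iff₀ hy, mul_comm]
      exact hb
    have hqb := qbound h u X 0 (by norm_num) hcd hd hX0
    set A : ℝ → ℝ := fun t => Real.log (Real.exp 1 + t) with hAdef
    have hAcont : ContinuousOn A (Ici 0) := by
      apply ContinuousOn.log (by fun_prop)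
      intro t ht
      have ht0 : (0:ℝ) ≤ t := ht
      nlinarith [Real.exp_pos 1]
    have hA1 : ∀ t, 0 ≤ t → 1 ≤ A t := by
      intro t ht
      rw [hAdef]
      have hl := Real.log_le_log (Real.exp_pos 1) (by linarith : Real.exp 1 ≤ Real.exp 1 + t)
      rwa [Real.log_exp] at hl
    have hAmono : ∀ s t : ℝ, 0 ≤ s → s ≤ t → A s ≤ A t := by
      intro s t hs0 hst
      rw [hAdef]
      apply Real.log_le_log _ (by linarith)
      nlinarith [Real.exp_pos 1]
    have hq1 : ∀ t, 0 < t → |h u t - bar h u t| ≤ X * t := fun t ht => (hqb t ht).1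
    have hq2 : ∀ t, 0 < t → |h u t - bar h u t| ≤ X * 1 * A t / t := by
      intro t ht
      have h2 := (hqb t ht).2
      have hP : ∫ s in (0:ℝ)..t, (1+s) ^ ((0:ℝ)-1) ≤ A t := by
        have hder : ∀ s ∈ uIcc (0:ℝ) t, HasDerivAt (fun s : ℝ => Real.log (1+s))
            ((1+s) ^ ((0:ℝ)-1)) s := by
          intro s hs
          rw [uIcc_of_le ht.le] at hs
          have h1 : (0:ℝ) < 1 + s := by linarith [hs.1]
          have hld := ((hasDerivAt_id s).const_add 1).log h1.ne'
          convert hld using 1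
          · rfl
          rw [show (0:ℝ)-1 = -1 by norm_num, Real.rpow_neg_one]
          field_simp
          simp [h1.ne']
        rw [intervalIntegral.integral_eq_sub_of_hasDerivAt hder
          (by
            apply ContinuousOn.intervalIntegrable
            rw [uIcc_of_le ht.le]
            exact rpow_cont _ (fun x hx => by linarith [hx.1]))]
        rw [show (1:ℝ)+0 = 1 by norm_num, Real.log_one, sub_zero, hAdef]
        apply Real.log_le_log (by linarith)
        nlinarith [Real.exp_pos 1, he1]
      calc |h u t - bar h u t| ≤ X / ((1-0)*t) * ∫ s in (0:ℝ)..t, (1+s) ^ ((0:ℝ)-1) := h2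
        _ ≤ X / ((1-0)*t) * A t := by
            apply mul_le_mul_of_nonneg_left hP
            apply div_nonneg hX0
            nlinarith
        _ = X * 1 * A t / t := by
            rw [show (1:ℝ)-0 = 1 by norm_num, one_mul, mul_one, div_mul_eq_mul_div]
    have htailA : ∀ ρ, 1 ≤ ρ → (∫ t in (1:ℝ)..ρ, (A t)^2/t^3) ≤ 24 := by
      intro ρ hρ
      calc ∫ t in (1:ℝ)..ρ, (A t)^2/t^3 ≤ ∫ t in (1:ℝ)..ρ, 36*t^(-(5:ℝ)/2) := by
            apply intervalIntegral.integral_mono_on hρ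
            · apply ContinuousOn.intervalIntegrable
              rw [uIcc_of_le hρ]
              intro t ht'
              have ht0 : (0:ℝ) < t := lt_of_lt_of_le one_pos ht'.1
              exact ContinuousWithinAt.div
                (((hAcont.mono (fun x hx => le_trans zero_le_one hx.1)) t ht').pow 2)
                (continuousWithinAt_id.pow 3) (pow_ne_zero 3 ht0.ne')
            · apply ContinuousOn.intervalIntegrable
              rw [uIcc_of_le hρ]
              apply ContinuousOn.mul continuousOn_const
              apply ContinuousOn.rpow_const continuousOn_id
              intro t ht'
              exact Or.inl (lt_of_lt_of_le one_pos ht'.1).ne'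
            · intro t ht'
              have ht0 : (0:ℝ) < t := lt_of_lt_of_le one_pos ht'.1
              have hls := log_sq_le ht'.1
              have e3 : t^((1:ℝ)/2)/t^3 = t^(-(5:ℝ)/2) := by
                rw [← Real.rpow_natCast t 3, ← Real.rpow_sub ht0]
                norm_num
              calc (A t)^2/t^3 ≤ 36*t^((1:ℝ)/2)/t^3 := by
                    rw [div_le_div_iff_of_pos_right (pow_pos ht0 3)]
                    exact hls
                _ = 36*(t^((1:ℝ)/2)/t^3) := by ring
                _ = 36*t^(-(5:ℝ)/2) := by rw [e3]
        _ ≤ 24 := int_rpow_52 hρ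
    have htail2A : ∀ ρ, 1 ≤ ρ → (∫ t in (1:ℝ)..ρ, (A t)^2) ≤ ρ*(A ρ)^2 := by
      intro ρ hρ
      have hAρ0 : 0 ≤ A ρ := le_trans zero_le_one (hA1 ρ (by linarith))
      calc ∫ t in (1:ℝ)..ρ, (A t)^2 ≤ ∫ _t in (1:ℝ)..ρ, (A ρ)^2 := by
            apply intervalIntegral.integral_mono_on hρ
            · apply ContinuousOn.intervalIntegrable
              rw [uIcc_of_le hρ]
              exact (hAcont.mono (fun x hx => le_trans zero_le_one hx.1)).pow 2
            · exact intervalIntegrable_const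
            · intro t ht'
              have hA0t : 0 ≤ A t := le_trans zero_le_one (hA1 t (le_trans zero_le_one ht'.1))
              exact pow_le_pow_left₀ hA0t (hAmono t ρ (le_trans zero_le_one ht'.1) ht'.2) 2
        _ = (ρ-1) * (A ρ)^2 := by rw [intervalIntegral.integral_const, smul_eq_mul]
        _ ≤ ρ*(A ρ)^2 := by nlinarith [sq_nonneg (A ρ)]
    obtain ⟨hJ0, hJs, hJl⟩ := core h u X 1 A (fun ρ => ρ*(A ρ)^2) hcont hX0 le_rfl hXc5
      hAcont hq1 hq2 htailA htail2A
    rw [show chi 0 = 1 from if_pos rfl, show Hjump 0 = 0 from if_neg (lt_irrefl 0),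
      show deltaPlus 0 = 0 from max_self 0, show 2*(1:ℝ)+1-0 = ((3:ℕ):ℝ) by norm_num,
      show (1:ℝ)-2*0 = 1 by norm_num, Real.rpow_natCast, Real.rpow_one]
    have hlog1 : 1 ≤ A r := hA1 r hr
    have hA3 : 1 ≤ (A r)^3 := by
      nlinarith [mul_nonneg (sub_nonneg.2 hlog1) (sq_nonneg (A r)), sq_nonneg (A r - 1)]
    have hfr0 : (0:ℝ) ≤ (A r)^3/(1+r) := div_nonneg (by linarith) (by linarith)
    rcases eq_or_lt_of_le hr with h0 | h0
    · rw [← h0, hJ0, abs_zero]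
      have hAr00 : (0:ℝ) ≤ (A 0)^3/(1+0) :=
        div_nonneg (pow_nonneg (by linarith [hA1 0 le_rfl]) 3) (by norm_num)
      have : (0:ℝ) ≤ 100 * Real.exp 1 * ((A 0)^3/(1+0)) * X^2 :=
        mul_nonneg (mul_nonneg (by positivity) hAr00) (sq_nonneg X)
      linarith
    rcases le_total r 1 with hr1 | hr1
    · have hb := hJs r h0 hr1
      have hfrac : 1/2 ≤ (A r)^3/(1+r) := by
        rw [le_div_iff₀ (by linarith : (0:ℝ) < 1+r)]
        nlinarith
      have hP1 : (0:ℝ) ≤ Real.exp 1 * X^2 := mul_nonneg hee.le (sq_nonneg X)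
      calc |mJ h u r| ≤ 2 * Real.exp 1 * 1^2 * X^2 * r := hb
        _ ≤ 100 * Real.exp 1 * ((A r)^3/(1+r)) * X^2 := by
            nlinarith [hP1, hfrac, hr1, hfr0]
    · have hb := hJl r hr1
      have hr0 : (0:ℝ) < r := lt_of_lt_of_le one_pos hr1
      have hA2 : 1 ≤ (A r)^2 := by nlinarith
      have hQ : (3/(2*r^2)) * (1/3 + r*(A r)^2) + (A r)^2 / r ≤ 6*((A r)^3/(1+r)) := by
        have e1 : (A r)^2*((1+5*r)/(2*r^2))
            - ((3/(2*r^2)) * (1/3 + r*(A r)^2) + (A r)^2 / r) = ((A r)^2-1)/(2*r^2) := by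
          field_simp
          ring
        have e2 : (0:ℝ) ≤ ((A r)^2-1)/(2*r^2) := div_nonneg (by linarith) (by positivity)
        have e4 : (1+5*r)/(2*r^2) ≤ 6/(1+r) := by
          rw [div_le_div_iff₀ (by positivity) (by positivity)]
          nlinarith [mul_nonneg (by linarith : (0:ℝ) ≤ 7*r+1) (by linarith : (0:ℝ) ≤ r-1)]
        have e5 : (A r)^2*((1+5*r)/(2*r^2)) ≤ (A r)^2*(6/(1+r)) :=
          mul_le_mul_of_nonneg_left e4 (sq_nonneg _)
        have e6 : (A r)^2*(6/(1+r)) ≤ 6*((A r)^3/(1+r)) := by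
          rw [← mul_div_assoc, ← mul_div_assoc, div_le_div_iff_of_pos_right (by linarith : (0:ℝ) < 1+r)]
          nlinarith [mul_nonneg (sq_nonneg (A r)) (sub_nonneg.2 hlog1)]
        linarith
      have hP1 : (0:ℝ) ≤ Real.exp 1 * 1^2 * X^2 := by positivity
      calc |mJ h u r| ≤ Real.exp 1 * 1^2 * X^2
            * ((3/(2*r^2)) * (1/3 + r*(A r)^2) + (A r)^2 / r) := hb
        _ ≤ Real.exp 1 * 1^2 * X^2 * (6*((A r)^3/(1+r))) := mul_le_mul_of_nonneg_left hQ hP1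
        _ ≤ 100 * Real.exp 1 * ((A r)^3/(1+r)) * X^2 := by
            nlinarith [hfr0, mul_nonneg hee.le (sq_nonneg X)]
  · -- case 0 < δ
    have hδne : δ ≠ 0 := hpos.ne'
    set c : ℝ := 2/δ with hcdef
    have hc0 : (0:ℝ) < c := div_pos two_pos hpos
    have hc1 : (1:ℝ) ≤ c := by
      rw [hcdef, le_div_iff₀ hpos]
      linarith
    refine ⟨1/(5*c), one_div_pos.2 (by linarith), 100 * Real.exp 1 * c^2,
      mul_pos (by positivity) (pow_pos hc0 2), ?_⟩
    intro U h hcontU hC1 X hXb hXγ u hu r hr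
    have hcd := hC1 u hu
    have hcont : ContinuousOn (h u) (Ici 0) := hcd.continuousOn
    have hX0 : 0 ≤ X := le_trans (by positivity) (hXb u hu 0 le_rfl)
    have hXc5 : X * c ≤ 1/5 := by
      have := mul_lt_mul_of_pos_right hXγ hc0
      have e1 : 1/(5*c) * c = 1/5 := by field_simp
      linarith
    have hd : ∀ t, 0 ≤ t → |deriv (h u) t| ≤ X * (1+t) ^ (δ-2) := by
      intro t ht
      have hb := hXb u hu t ht
      have hy : (0:ℝ) < (1+t) ^ (2-δ) := Real.rpow_pos_of_pos (by linarith) _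
      rw [show δ-2 = -(2-δ) by ring, Real.rpow_neg (by linarith : (0:ℝ) ≤ 1+t),
        ← div_eq_mul_inv, le_div_iff₀ hy, mul_comm]
      exact hb
    have hqb := qbound h u X δ (by linarith) hcd hd hX0
    have hAcont : ContinuousOn (fun t : ℝ => (1+t)^δ) (Ici 0) := by
      apply ContinuousOn.rpow_const (by fun_prop)
      intro x hx
      have hx0 : (0:ℝ) ≤ x := hx
      exact Or.inl (by linarith : (0:ℝ) < 1+x).ne'
    have hq1 : ∀ t, 0 < t → |h u t - bar h u t| ≤ X * t := fun t ht => (hqb t ht).1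
    have hq2 : ∀ t, 0 < t →
        |h u t - bar h u t| ≤ X * c * (fun t : ℝ => (1+t)^δ) t / t := by
      intro t ht
      have h2 := (hqb t ht).2
      have hy0 : (0:ℝ) < (1+t)^δ := Real.rpow_pos_of_pos (by linarith) _
      have hP : ∫ s in (0:ℝ)..t, (1+s) ^ (δ-1) ≤ (1+t)^δ/δ := by
        rw [integral_rpow_shift (by intro hh; linarith) le_rfl ht.le, show δ-1+1 = δ by ring]
        have e0 : (1+(0:ℝ)) ^ δ = 1 := by norm_num
        rw [e0, div_le_div_iff_of_pos_right hpos]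
        linarith
      calc |h u t - bar h u t| ≤ X / ((1-δ)*t) * ∫ s in (0:ℝ)..t, (1+s) ^ (δ-1) := h2
        _ ≤ X / ((1-δ)*t) * ((1+t)^δ/δ) := mul_le_mul_of_nonneg_left hP
            (div_nonneg hX0 (mul_nonneg (by linarith) ht.le))
        _ ≤ X * c * (fun t : ℝ => (1+t)^δ) t / t := by
            simp only
            have hD1 : (0:ℝ) < (1-δ)*t*δ := mul_pos (mul_pos (by linarith) ht) hpos
            have hD2 : (0:ℝ) < δ*t := mul_pos hpos ht
            have e1 : X / ((1-δ)*t) * ((1+t)^δ/δ) = X*(1+t)^δ/((1-δ)*t*δ) := by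
              rw [div_mul_div_comm]
            have e2 : X * c * ((1+t)^δ) / t = 2*X*(1+t)^δ/(δ*t) := by
              rw [hcdef]
              field_simp
              try ring
              try exact Or.inl trivial
            rw [e1, e2, div_le_div_iff₀ hD1 hD2]
            nlinarith [mul_nonneg (mul_nonneg (mul_nonneg hX0 hy0.le) hpos.le) ht.le,
              (by linarith : (0:ℝ) ≤ 1-2*δ)]
    have hpow2 : ∀ t : ℝ, 1 ≤ t → ((1+t)^δ)^2 ≤ 2*t := by
      intro t ht1
      have ht0 : (0:ℝ) < t := lt_of_lt_of_le one_pos ht1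
      have e1 : ((1+t)^δ)^2 = (1+t)^(δ*2) := by
        rw [← Real.rpow_natCast ((1+t)^δ) 2, ← Real.rpow_mul (by linarith : (0:ℝ) ≤ 1+t)]
        norm_num
      have e2 : (1+t)^(δ*2) ≤ (2*t)^(δ*2) :=
        Real.rpow_le_rpow (by linarith) (by linarith) (by positivity)
      have e3 : (2*t)^(δ*2) = 2^(δ*2)*t^(δ*2) := Real.mul_rpow (by norm_num) ht0.le
      have e4 : (2:ℝ)^(δ*2) ≤ 2^(1:ℝ) :=
        Real.rpow_le_rpow_of_exponent_le one_le_two (by linarith)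
      have e5 : t^(δ*2) ≤ t^(1:ℝ) := Real.rpow_le_rpow_of_exponent_le ht1 (by linarith)
      have e6 : (2:ℝ)^(1:ℝ) = 2 := Real.rpow_one 2
      have e7 : t^(1:ℝ) = t := Real.rpow_one t
      have h2nn : (0:ℝ) ≤ (2:ℝ)^(δ*2) := Real.rpow_nonneg (by norm_num) _
      have htnn : (0:ℝ) ≤ t^(δ*2) := Real.rpow_nonneg ht0.le _
      calc ((1+t)^δ)^2 = (1+t)^(δ*2) := e1
        _ ≤ (2*t)^(δ*2) := e2
        _ = 2^(δ*2)*t^(δ*2) := e3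
        _ ≤ 2*t := by
            have e4' : (2:ℝ)^(δ*2) ≤ 2 := e4.trans_eq e6
            have e5' : t^(δ*2) ≤ t := e5.trans_eq e7
            exact mul_le_mul e4' e5' htnn (by norm_num)
    have htailA : ∀ ρ, 1 ≤ ρ →
        (∫ t in (1:ℝ)..ρ, ((fun t : ℝ => (1+t)^δ) t)^2/t^3) ≤ 24 := by
      intro ρ hρ
      have hmono : ∫ t in (1:ℝ)..ρ, ((fun t : ℝ => (1+t)^δ) t)^2/t^3
          ≤ ∫ t in (1:ℝ)..ρ, 2/t^2 := by
        apply intervalIntegral.integral_mono_on hρ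
        · apply ContinuousOn.intervalIntegrable
          rw [uIcc_of_le hρ]
          intro t ht'
          have ht0 : (0:ℝ) < t := lt_of_lt_of_le one_pos ht'.1
          exact ContinuousWithinAt.div
            (((hAcont.mono (fun x hx => le_trans zero_le_one hx.1)) t ht').pow 2)
            (continuousWithinAt_id.pow 3) (pow_ne_zero 3 ht0.ne')
        · apply ContinuousOn.intervalIntegrable
          rw [uIcc_of_le hρ]
          intro t ht'
          have ht0 : (0:ℝ) < t := lt_of_lt_of_le one_pos ht'.1
          exact ContinuousWithinAt.div continuousWithinAt_const
            (continuousWithinAt_id.pow 2) (pow_ne_zero 2 ht0.ne')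
        · intro t ht'
          have ht0 : (0:ℝ) < t := lt_of_lt_of_le one_pos ht'.1
          have e8 : 2*t/t^3 = 2/t^2 := by
            field_simp
          calc ((fun t : ℝ => (1+t)^δ) t)^2/t^3 ≤ 2*t/t^3 := by
                simp only
                rw [div_le_div_iff_of_pos_right (pow_pos ht0 3)]
                exact hpow2 t ht'.1
            _ = 2/t^2 := e8
      linarith [hmono, int_inv_sq hρ]
    have htail2A : ∀ ρ, 1 ≤ ρ →
        (∫ t in (1:ℝ)..ρ, ((fun t : ℝ => (1+t)^δ) t)^2) ≤ (1+ρ)^(1+2*δ) := by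
      intro ρ hρ
      have hcongr : ∫ t in (1:ℝ)..ρ, ((fun t : ℝ => (1+t)^δ) t)^2
          = ∫ t in (1:ℝ)..ρ, (1+t)^(δ*2) := by
        apply intervalIntegral.integral_congr
        intro t ht'
        rw [uIcc_of_le hρ] at ht'
        simp only
        rw [← Real.rpow_natCast ((1+t)^δ) 2,
          ← Real.rpow_mul (by linarith [ht'.1] : (0:ℝ) ≤ 1+t)]
        norm_num
      rw [hcongr, integral_rpow_shift (by intro hh; linarith) (by norm_num) hρ]
      have h21 : (0:ℝ) < δ*2+1 := by linarith
      have hnum : (0:ℝ) ≤ (1+(1:ℝ))^(δ*2+1) := Real.rpow_nonneg (by norm_num) _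
      have hNnn : (0:ℝ) ≤ (1+ρ)^(δ*2+1) := Real.rpow_nonneg (by linarith) _
      have hd1 : ((1+ρ)^(δ*2+1) - (1+1)^(δ*2+1))/(δ*2+1) ≤ (1+ρ)^(δ*2+1) := by
        rw [div_le_iff₀ h21]
        nlinarith [mul_nonneg hNnn hpos.le]
      rw [show (1:ℝ)+2*δ = δ*2+1 by ring]
      exact hd1
    obtain ⟨hJ0, hJs, hJl⟩ := core h u X c (fun t : ℝ => (1+t)^δ)
      (fun ρ => (1+ρ)^(1+2*δ)) hcont hX0 hc1 hXc5 hAcont hq1 hq2 htailA htail2A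
    rw [show chi δ = 0 from if_neg hδne, show Hjump δ = 1 from if_pos hpos,
      show deltaPlus δ = δ from max_eq_left hpos.le,
      show 2*(0:ℝ)+1-1 = 0 by norm_num, Real.rpow_zero]
    have hY1 : (1:ℝ) ≤ 1+r := by linarith
    have hinv : 1/(1+r)^(1-2*δ) = (1+r)^(2*δ-1) := by
      rw [show 2*δ-1 = -(1-2*δ) by ring, Real.rpow_neg (by linarith : (0:ℝ) ≤ 1+r), one_div]
    rw [hinv]
    have hZ0 : (0:ℝ) ≤ (1+r)^(2*δ-1) := Real.rpow_nonneg (by linarith) _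
    have hP1 : (0:ℝ) ≤ Real.exp 1 * c^2 * X^2 :=
      mul_nonneg (mul_nonneg hee.le (sq_nonneg c)) (sq_nonneg X)
    rcases eq_or_lt_of_le hr with h0 | h0
    · rw [← h0, hJ0, abs_zero]
      have : (0:ℝ) ≤ 100 * Real.exp 1 * c^2 * (1+0)^(2*δ-1) * X^2 := by
        apply mul_nonneg (mul_nonneg (by positivity) (Real.rpow_nonneg (by norm_num) _))
          (sq_nonneg X)
      linarith
    rcases le_total r 1 with hr1 | hr1
    · have hb := hJs r h0 hr1
      have hZhalf : 1/2 ≤ (1+r)^(2*δ-1) := by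
        have a1 : (1+r)^(-1:ℝ) ≤ (1+r)^(2*δ-1) :=
          Real.rpow_le_rpow_of_exponent_le hY1 (by linarith)
        have a2 : (1+r)^(-1:ℝ) = (1+r)⁻¹ := Real.rpow_neg_one _
        have a3 : (1/2:ℝ) ≤ (1+r)⁻¹ := by
          rw [inv_eq_one_div, div_le_div_iff₀ (by norm_num) (by linarith)]
          linarith
        rw [a2] at a1
        linarith
      calc |mJ h u r| ≤ 2 * Real.exp 1 * c^2 * X^2 * r := hb
        _ ≤ 100 * Real.exp 1 * c^2 * (1+r)^(2*δ-1) * X^2 := by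
            nlinarith [hP1, hZhalf, hr1, hZ0]
    · have hb := hJl r hr1
      have hr0 : (0:ℝ) < r := lt_of_lt_of_le one_pos hr1
      have p0 : 1/(2*r^2) ≤ (1+r)^(2*δ-1) := by
        have a1 : (1+r)^(-1:ℝ) ≤ (1+r)^(2*δ-1) :=
          Real.rpow_le_rpow_of_exponent_le hY1 (by linarith)
        have a2 : (1+r)^(-1:ℝ) = (1+r)⁻¹ := Real.rpow_neg_one _
        have a3 : 1/(2*r^2) ≤ (1+r)⁻¹ := by
          rw [inv_eq_one_div, div_le_div_iff₀ (by positivity) (by linarith)]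
          nlinarith [mul_nonneg (by linarith : (0:ℝ) ≤ 2*r+1) (by linarith : (0:ℝ) ≤ r-1)]
        rw [a2] at a1
        linarith
      have p2 : (3/(2*r^2)) * (1+r)^(1+2*δ) ≤ 6*(1+r)^(2*δ-1) := by
        have b1 : (1+r)^(1+2*δ) = (1+r)^(2*δ-1) * (1+r)^(2:ℕ) := by
          rw [← Real.rpow_natCast (1+r) 2,
            ← Real.rpow_add (by linarith : (0:ℝ) < 1+r)]
          congr 1
          push_cast
          ring
        rw [b1]
        have b2 : (1+r)^(2:ℕ) ≤ 4*r^2 := by nlinarith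
        calc (3/(2*r^2))*((1+r)^(2*δ-1)*(1+r)^(2:ℕ))
            ≤ (3/(2*r^2))*((1+r)^(2*δ-1)*(4*r^2)) := by
              apply mul_le_mul_of_nonneg_left _ (by positivity)
              exact mul_le_mul_of_nonneg_left b2 hZ0
          _ = 6*(1+r)^(2*δ-1)*(r^2/r^2) := by ring
          _ = 6*(1+r)^(2*δ-1) := by
              rw [div_self (by positivity : (r:ℝ)^2 ≠ 0), mul_one]
      have p3 : ((fun t : ℝ => (1+t)^δ) r)^2/r ≤ 2*(1+r)^(2*δ-1) := by
        simp only
        have c1 : ((1+r)^δ)^2 = (1+r)^(2*δ-1)*(1+r) := by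
          rw [← Real.rpow_natCast ((1+r)^δ) 2,
            ← Real.rpow_mul (by linarith : (0:ℝ) ≤ 1+r),
            show δ*((2:ℕ):ℝ) = (2*δ-1)+1 by push_cast; ring,
            Real.rpow_add (by linarith : (0:ℝ) < 1+r), Real.rpow_one]
        rw [c1, div_le_iff₀ hr0]
        nlinarith [mul_nonneg hZ0 (by linarith : (0:ℝ) ≤ r-1)]
      have hQ : (3/(2*r^2)) * (1/3 + (1+r)^(1+2*δ)) + ((fun t : ℝ => (1+t)^δ) r)^2/r
          ≤ 9*(1+r)^(2*δ-1) := by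
        have qsplit : (3/(2*r^2)) * (1/3 + (1+r)^(1+2*δ))
            = 1/(2*r^2) + (3/(2*r^2))*(1+r)^(1+2*δ) := by ring
        rw [qsplit]
        linarith [p0, p2, p3]
      calc |mJ h u r| ≤ Real.exp 1 * c^2 * X^2 * ((3/(2*r^2)) * (1/3 + (1+r)^(1+2*δ))
            + ((fun t : ℝ => (1+t)^δ) r)^2/r) := hb
        _ ≤ Real.exp 1 * c^2 * X^2 * (9*(1+r)^(2*δ-1)) := mul_le_mul_of_nonneg_left hQ hP1
        _ ≤ 100 * Real.exp 1 * c^2 * (1+r)^(2*δ-1) * X^2 := by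
            nlinarith [hP1, hZ0, mul_nonneg hP1 hZ0]
end
end
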